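/- arXiv:2601.04427 — 5 statements merged into one kernel-verified Lean document; each statement's English description precedes it below -/
import Mathlib

section
/- Let p be a prime and A a p-power torsion abelian group such that A[p] and A/pA are both finite. Then: (a) the Tate module T_pA is isomorphic as an abelian group to ℤ_p^{⊕r} for some natural number r; (b) the inverse system {A[p^n]}_{n≥1} with transition maps given by multiplication by p satisfies the Mittag–Leffler condition, i.e. for every n ≥ 1 there exists m ≥ n such that for all m' ≥ m the image of the map A[p^{m'}] → A[p^n], x ↦ p^{m'−n}·x, equals the image of the map A[p^m] → A[p^n], x ↦ p^{m−n}·x; (c) the p-adic completion Â = lim_n A/p^nA is isomorphic as an abelian group to ℤ_p^{⊕s} ⊕ F' for some natural number s and some finite abelian p-group F'. -/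
/-- Multiplication by `m` as an additive monoid homomorphism. -/
def smulHom (m : ℕ) (A : Type*) [AddCommGroup A] : A →+ A :=
  AddMonoidHom.mk' (fun a => m • a) (fun a b => smul_add m a b)

/-- The `m`-torsion subgroup `A[m]` of `A`. -/
def torsSub (m : ℕ) (A : Type*) [AddCommGroup A] : AddSubgroup A :=
  (smulHom m A).ker

/-- The subgroup `m·A` of `A`. -/
def mulRange (m : ℕ) (A : Type*) [AddCommGroup A] : AddSubgroup A :=
  (smulHom m A).range

lemma mem_torsSub {m : ℕ} {A : Type*} [AddCommGroup A] {a : A} :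
    a ∈ torsSub m A ↔ m • a = 0 := Iff.rfl

/-- The `p`-adic Tate module of `A`, realized as the group of sequences
`(a_n)` (indexed so that `a n` corresponds to `a_{n+1}`) with `p^(n+1) • a n = 0`
and `p • a (n+1) = a n`. -/
def Tate (p : ℕ) (A : Type*) [AddCommGroup A] : AddSubgroup (ℕ → A) where
  carrier := {a | (∀ n, p ^ (n + 1) • a n = 0) ∧ ∀ n, p • a (n + 1) = a n}
  zero_mem' := ⟨fun n => smul_zero _, fun n => smul_zero _⟩
  add_mem' := by
    rintro a b ⟨ha1, ha2⟩ ⟨hb1, hb2⟩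
    exact ⟨fun n => by simp [smul_add, ha1 n, hb1 n],
           fun n => by simp [smul_add, ha2 n, hb2 n]⟩
  neg_mem' := by
    rintro a ⟨ha1, ha2⟩
    exact ⟨fun n => by simp [smul_neg, ha1 n], fun n => by simp [smul_neg, ha2 n]⟩

lemma mem_Tate {p : ℕ} {A : Type*} [AddCommGroup A] {a : ℕ → A} :
    a ∈ Tate p A ↔ (∀ n, p ^ (n + 1) • a n = 0) ∧ ∀ n, p • a (n + 1) = a n := Iff.rfl

/-- The Prüfer group `ℚ_p/ℤ_p`. -/
abbrev QmodZ (p : ℕ) [Fact p.Prime] : Type :=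
  ℚ_[p] ⧸ (PadicInt.Coe.ringHom (p := p)).toAddMonoidHom.range

/-- Transition map `A/p^(n+2)A → A/p^(n+1)A` in the `p`-adic completion. -/
def projHom (p : ℕ) (A : Type*) [AddCommGroup A] (n : ℕ) :
    (A ⧸ mulRange (p ^ (n + 2)) A) →+ (A ⧸ mulRange (p ^ (n + 1)) A) :=
  QuotientAddGroup.map _ _ (AddMonoidHom.id A) (by
    rintro x ⟨a, rfl⟩
    exact ⟨p • a, by
      show (p ^ (n + 1)) • (p • a) = (AddMonoidHom.id A) ((p ^ (n + 2)) • a)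
      simp [← mul_smul, ← pow_succ]⟩)

/-- The `p`-adic completion `lim_n A/p^n A` of `A`, realized as the group of
compatible sequences (`c n` corresponds to the component in `A/p^(n+1)A`). -/
def Completion (p : ℕ) (A : Type*) [AddCommGroup A] :
    AddSubgroup (∀ n : ℕ, A ⧸ mulRange (p ^ (n + 1)) A) where
  carrier := {c | ∀ n, projHom p A n (c (n + 1)) = c n}
  zero_mem' := fun n => map_zero _
  add_mem' := by
    intro a b ha hb n
    simp only [Pi.add_apply, map_add, ha n, hb n]
  neg_mem' := by
    intro a ha n
    simp only [Pi.neg_apply, map_neg, ha n]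


/-! ### Auxiliary lemmas -/

section helpers
variable {A : Type} [AddCommGroup A]

lemma smul_congr_mod {k : ℕ} {a : A} (h : k • a = 0) {m n : ℕ} (hmn : m ≡ n [MOD k]) :
    m • a = n • a := by
  obtain ⟨d, hd⟩ := hmn.dvd
  have h2 : ((n : ℤ) - (m : ℤ)) • a = 0 := by
    rw [hd, mul_comm, mul_smul, natCast_zsmul, h, smul_zero]
  have h3 : (n : ℤ) • a = (m : ℤ) • a := by
    have := sub_smul (n : ℤ) (m : ℤ) a
    rw [h2] at this
    linear_combination (norm := abel) -this
  rw [natCast_zsmul, natCast_zsmul] at h3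
  exact h3.symm

lemma chain_stab {X : Type*} {f : ℕ → Set X} (hdec : ∀ n, f (n + 1) ⊆ f n)
    {S : Set X} (hS : S.Finite) (hsub : ∀ n, f n ⊆ S) :
    ∃ N, ∀ m, N ≤ m → f m = f N := by
  have hmono : ∀ {m n}, n ≤ m → f m ⊆ f n := by
    intro m n h
    induction h with
    | refl => exact le_refl _
    | step h ih => exact fun x hx => ih (hdec _ hx)
  have hfin : ∀ n, (f n).Finite := fun n => hS.subset (hsub n)
  set c : ℕ → ℕ := fun n => (f n).ncard with hc
  have hne : (Set.range c).Nonempty := ⟨c 0, ⟨0, rfl⟩⟩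
  obtain ⟨N, hN⟩ := Nat.sInf_mem hne
  refine ⟨N, fun m hm => ?_⟩
  refine Set.eq_of_subset_of_ncard_le (hmono hm) ?_ (hfin N)
  exact le_trans (le_of_eq hN) (Nat.sInf_le ⟨m, rfl⟩)

end helpers


section tors
variable {p : ℕ} {A : Type} [AddCommGroup A]

lemma torsSet_finite (h1 : Finite (torsSub p A)) : ∀ k, {x : A | p ^ k • x = 0}.Finite := by
  have hT1 : {x : A | p • x = 0}.Finite := by
    have : {x : A | p • x = 0} = (torsSub p A : Set A) := by
      ext x; exact Iff.rfl
    rw [this, ← Set.finite_coe_iff]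
    exact h1
  intro k
  induction k with
  | zero =>
    have : {x : A | p ^ 0 • x = 0} = {(0 : A)} := by
      ext x; simp
    rw [this]; exact Set.finite_singleton 0
  | succ k ih =>
    have hsub : {x : A | p ^ (k+1) • x = 0} ⊆
        ⋃ y ∈ {x : A | p ^ k • x = 0}, {x : A | p ^ (k+1) • x = 0 ∧ p • x = y} := by
      intro x hx
      have hmem : p ^ k • (p • x) = 0 := by
        rw [← mul_smul, ← pow_succ]; exact hx
      exact Set.mem_biUnion hmem ⟨hx, rfl⟩
    refine Set.Finite.subset (Set.Finite.biUnion ih fun y hy => ?_) hsub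
    by_cases hne : {x : A | p ^ (k+1) • x = 0 ∧ p • x = y}.Nonempty
    · obtain ⟨x₀, hx₀⟩ := hne
      refine Set.Finite.subset ((hT1.image (fun t => x₀ + t))) ?_
      rintro x ⟨hx1, hx2⟩
      refine ⟨x - x₀, ?_, show x₀ + (x - x₀) = x by abel⟩
      show p • (x - x₀) = 0
      rw [smul_sub, hx2, hx₀.2, sub_self]
    · rw [Set.not_nonempty_iff_eq_empty] at hne
      rw [hne]; exact Set.finite_empty

end tors


section partb
variable {p : ℕ} {A : Type} [AddCommGroup A]

lemma partB (h1 : Finite (torsSub p A)) (n : ℕ) (hn : 1 ≤ n) :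
    ∃ m : ℕ, n ≤ m ∧ ∀ m' : ℕ, m ≤ m' →
      (fun x : A => p ^ (m' - n) • x) '' {x : A | p ^ m' • x = 0} =
        (fun x : A => p ^ (m - n) • x) '' {x : A | p ^ m • x = 0} := by
  set F : ℕ → Set A := fun k => (fun x : A => p ^ k • x) '' {x : A | p ^ (n + k) • x = 0} with hF
  have hdec : ∀ k, F (k + 1) ⊆ F k := by
    rintro k y ⟨x, hx, rfl⟩
    refine ⟨p • x, ?_, ?_⟩
    · show p ^ (n + k) • (p • x) = 0
      rw [← mul_smul, ← pow_succ]
      exact hx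
    · show p ^ k • (p • x) = p ^ (k + 1) • x
      rw [← mul_smul, ← pow_succ]
  have hsub : ∀ k, F k ⊆ {x : A | p ^ n • x = 0} := by
    rintro k y ⟨x, hx, rfl⟩
    show p ^ n • p ^ k • x = 0
    rw [← mul_smul, ← pow_add]
    exact hx
  obtain ⟨K, hK⟩ := chain_stab hdec (torsSet_finite h1 n) hsub
  have key : ∀ m', n ≤ m' →
      (fun x : A => p ^ (m' - n) • x) '' {x : A | p ^ m' • x = 0} = F (m' - n) := by
    intro m' h
    have e1 : n + (m' - n) = m' := Nat.add_sub_cancel' h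
    show _ = (fun x : A => p ^ (m' - n) • x) '' {x : A | p ^ (n + (m' - n)) • x = 0}
    rw [e1]
  refine ⟨n + K, Nat.le_add_right _ _, fun m' hm' => ?_⟩
  have h1' : n ≤ m' := le_trans (Nat.le_add_right _ _) hm'
  rw [key m' h1', key (n + K) (Nat.le_add_right _ _), Nat.add_sub_cancel_left,
    hK (m' - n) (by omega), hK K (le_refl _)]

end partb


section partc
variable {p : ℕ} {A : Type} [AddCommGroup A]

lemma mem_mulRange {m : ℕ} {x : A} : x ∈ mulRange m A ↔ ∃ a : A, m • a = x := Iff.rfl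

lemma range_stab (hA : ∀ a : A, ∃ n : ℕ, p ^ n • a = 0) (h1 : Finite (torsSub p A)) :
    ∃ N : ℕ, ∀ m : ℕ, N ≤ m → mulRange (p ^ m) A = mulRange (p ^ N) A := by
  set B : ℕ → Set A := fun n => {a : A | a ∈ mulRange (p ^ n) A ∧ p • a = 0} with hB
  have hdec : ∀ n, B (n + 1) ⊆ B n := by
    rintro n a ⟨⟨b, rfl⟩, h2'⟩
    refine ⟨⟨p • b, ?_⟩, h2'⟩
    show p ^ n • (p • b) = p ^ (n + 1) • b
    rw [← mul_smul, ← pow_succ]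
  have hsub : ∀ n, B n ⊆ {x : A | p ^ 1 • x = 0} := by
    rintro n a ⟨-, h2'⟩
    show p ^ 1 • a = 0
    rwa [pow_one]
  obtain ⟨N, hN⟩ := chain_stab hdec (torsSet_finite h1 1) hsub
  have key : ∀ (K : ℕ) (x : A), x ∈ mulRange (p ^ N) A → p ^ K • x = 0 →
      x ∈ mulRange (p ^ (N + 1)) A := by
    intro K
    induction K with
    | zero =>
      intro x hx h0
      rw [pow_zero, one_smul] at h0
      rw [h0]
      exact zero_mem _
    | succ K ih =>
      rintro x ⟨a, rfl⟩ hord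
      -- x = p^N • a
      have hxa : smulHom (p ^ N) A a = p ^ N • a := rfl
      rw [hxa] at hord ⊢
      have hBmem : p ^ K • (p ^ N • a) ∈ B (N + K) := by
        constructor
        · refine ⟨a, ?_⟩
          show p ^ (N + K) • a = p ^ K • p ^ N • a
          rw [← mul_smul, ← pow_add, Nat.add_comm K N]
        · show p • p ^ K • p ^ N • a = 0
          rw [← mul_smul, ← pow_succ']
          exact hord
      have hBmem' : p ^ K • (p ^ N • a) ∈ B (N + K + 1) := by
        rw [hN (N + K + 1) (by omega), ← hN (N + K) (by omega)]
        exact hBmem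
      obtain ⟨⟨b, hb⟩, -⟩ := hBmem'
      -- hb : p^(N+K+1) • b = p^K • (p^N • a)
      have hb' : p ^ (N + K + 1) • b = p ^ K • p ^ N • a := hb
      have hz : p ^ K • (p ^ N • a - p ^ (N + 1) • b) = 0 := by
        rw [smul_sub, ← hb', ← mul_smul, ← pow_add,
          show K + (N + 1) = N + K + 1 by omega]
        exact sub_self _
      have hz2 : (p ^ N • a - p ^ (N + 1) • b) ∈ mulRange (p ^ N) A := by
        refine sub_mem ⟨a, rfl⟩ ⟨p • b, ?_⟩
        show p ^ N • (p • b) = p ^ (N + 1) • b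
        rw [← mul_smul, ← pow_succ]
      obtain ⟨c, hc⟩ := ih _ hz2 hz
      have hc' : p ^ (N + 1) • c = p ^ N • a - p ^ (N + 1) • b := hc
      refine ⟨c + b, ?_⟩
      show p ^ (N + 1) • (c + b) = p ^ N • a
      rw [smul_add, hc']
      abel
  have hNsub : mulRange (p ^ N) A ≤ mulRange (p ^ (N + 1)) A := by
    intro x hx
    obtain ⟨K, hK⟩ := hA x
    exact key K x hx hK
  have hsub2 : ∀ k, mulRange (p ^ N) A ≤ mulRange (p ^ (N + k)) A := by
    intro k
    induction k with
    | zero => exact le_refl _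
    | succ k ih =>
      intro x hx
      obtain ⟨a, ha⟩ := hNsub hx
      have ha' : p ^ (N + 1) • a = x := ha
      have hmem : (p ^ N • a) ∈ mulRange (p ^ N) A := ⟨a, rfl⟩
      obtain ⟨c, hc⟩ := ih hmem
      have hc' : p ^ (N + k) • c = p ^ N • a := hc
      refine ⟨c, ?_⟩
      show p ^ (N + (k + 1)) • c = x
      rw [show N + (k + 1) = (N + k) + 1 by omega, pow_succ, mul_comm, mul_smul, hc',
        ← mul_smul, ← pow_succ']
      exact ha'
  refine ⟨N, fun m hm => ?_⟩
  apply le_antisymm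
  · rintro x ⟨a, rfl⟩
    refine ⟨p ^ (m - N) • a, ?_⟩
    show p ^ N • (p ^ (m - N) • a) = p ^ m • a
    rw [← mul_smul, ← pow_add, Nat.add_sub_cancel' hm]
  · have := hsub2 (m - N)
    rwa [Nat.add_sub_cancel' hm] at this

lemma quot_finite (h2 : Finite (A ⧸ mulRange p A)) :
    ∀ k, Finite (A ⧸ mulRange (p ^ (k + 1)) A) := by
  intro k
  induction k with
  | zero =>
    rw [show mulRange (p ^ 1) A = mulRange p A by rw [pow_one]]
    exact h2
  | succ k ih =>
    set π := projHom p A k with hπ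
    -- kernel of π is contained in the range of ψ
    have hcomap : mulRange p A ≤ AddSubgroup.comap (smulHom (p ^ (k + 1)) A)
        (mulRange (p ^ (k + 2)) A) := by
      rintro x ⟨a, rfl⟩
      refine ⟨a, ?_⟩
      show p ^ (k + 2) • a = p ^ (k + 1) • (p • a)
      rw [← mul_smul, ← pow_succ]
    set ψ : (A ⧸ mulRange p A) →+ (A ⧸ mulRange (p ^ (k + 2)) A) :=
      QuotientAddGroup.map _ _ (smulHom (p ^ (k + 1)) A) hcomap with hψ
    have hker : (π.ker : Set (A ⧸ mulRange (p ^ (k + 2)) A)) ⊆ (ψ.range : Set _) := by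
      intro x hx
      obtain ⟨a, rfl⟩ := QuotientAddGroup.mk_surjective x
      have hx' : π ((a : A ⧸ mulRange (p ^ (k + 2)) A)) = 0 := hx
      rw [hπ, projHom, QuotientAddGroup.map_mk] at hx'
      have : (AddMonoidHom.id A) a ∈ mulRange (p ^ (k + 1)) A :=
        (QuotientAddGroup.eq_zero_iff _).mp hx'
      obtain ⟨b, hb⟩ := this
      refine ⟨(b : A ⧸ mulRange p A), ?_⟩
      rw [hψ, QuotientAddGroup.map_mk]
      exact congrArg _ hb
    have hkerfin : Finite π.ker := by
      have : (Set.range ψ).Finite := Set.finite_range ψ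
      exact Set.Finite.to_subtype (this.subset hker)
    haveI := ih
    haveI := hkerfin
    haveI : Finite ((A ⧸ mulRange (p ^ (k + 2)) A) ⧸ π.ker) :=
      Finite.of_equiv _ (QuotientAddGroup.quotientKerEquivRange π).symm.toEquiv
    exact Finite.of_equiv _ (AddSubgroup.addGroupEquivQuotientProdAddSubgroup (s := π.ker)).symm

end partc


section partc2
variable {p : ℕ} {A : Type} [AddCommGroup A]

lemma completion_props (hA : ∀ a : A, ∃ n : ℕ, p ^ n • a = 0) (h1 : Finite (torsSub p A))
    (h2 : Finite (A ⧸ mulRange p A)) :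
    Finite (Completion p A) ∧ (∀ x : Completion p A, ∃ n : ℕ, p ^ n • x = 0) := by
  obtain ⟨N, hN⟩ := range_stab hA h1
  let ev : Completion p A →+ A ⧸ mulRange (p ^ (N + 1)) A :=
    { toFun := fun c => c.1 N
      map_zero' := rfl
      map_add' := fun a b => rfl }
  have hinjproj : ∀ m : ℕ, N ≤ m → ∀ x : A ⧸ mulRange (p ^ (m + 2)) A,
      projHom p A m x = 0 → x = 0 := by
    intro m hm x hx
    obtain ⟨a, rfl⟩ := QuotientAddGroup.mk_surjective x
    rw [projHom, QuotientAddGroup.map_mk] at hx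
    have ha : (AddMonoidHom.id A) a ∈ mulRange (p ^ (m + 1)) A :=
      (QuotientAddGroup.eq_zero_iff _).mp hx
    have ha2 : a ∈ mulRange (p ^ (m + 2)) A := by
      have e1 : mulRange (p ^ (m + 1)) A = mulRange (p ^ N) A := hN _ (by omega)
      have e2 : mulRange (p ^ (m + 2)) A = mulRange (p ^ N) A := hN _ (by omega)
      rw [e2, ← e1]
      exact ha
    exact (QuotientAddGroup.eq_zero_iff _).mpr ha2
  have hevinj : Function.Injective ev := by
    intro c d hcd
    have h0 : (c - d).1 N = 0 := by
      have : ev (c - d) = 0 := by rw [map_sub, hcd, sub_self]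
      exact this
    suffices hsuff : c - d = 0 by rwa [sub_eq_zero] at hsuff
    set e := c - d with he
    have hdown : ∀ k n, n + k = N → e.1 n = 0 := by
      intro k
      induction k with
      | zero =>
        intro n hn
        have : n = N := by omega
        subst this
        exact h0
      | succ k ih =>
        intro n hn
        have hnext : e.1 (n + 1) = 0 := ih (n + 1) (by omega)
        have hstep : projHom p A n (e.1 (n + 1)) = e.1 n := e.2 _
        rw [hnext, map_zero] at hstep
        exact hstep.symm
    have hup : ∀ k, e.1 (N + k) = 0 := by
      intro k
      induction k with
      | zero => exact h0
      | succ k ih =>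
        have hstep : projHom p A (N + k) (e.1 (N + k + 1)) = e.1 (N + k) := e.2 _
        rw [ih] at hstep
        exact hinjproj (N + k) (by omega) _ hstep
    apply Subtype.ext
    funext n
    show e.1 n = 0
    rcases le_total n N with h | h
    · exact hdown (N - n) n (by omega)
    · have := hup (n - N)
      rwa [Nat.add_sub_cancel' h] at this
  haveI : Finite (A ⧸ mulRange (p ^ (N + 1)) A) := quot_finite h2 N
  have hz : ∀ y : A ⧸ mulRange (p ^ (N + 1)) A, p ^ (N + 1) • y = 0 := by
    intro y
    obtain ⟨a, rfl⟩ := QuotientAddGroup.mk_surjective y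
    calc p ^ (N + 1) • ((a : A) : A ⧸ mulRange (p ^ (N + 1)) A)
        = ((p ^ (N + 1) • a : A) : A ⧸ mulRange (p ^ (N + 1)) A) :=
          (map_nsmul (QuotientAddGroup.mk' (mulRange (p ^ (N + 1)) A)) _ _).symm
      _ = 0 := (QuotientAddGroup.eq_zero_iff _).mpr ⟨a, rfl⟩
  constructor
  · exact Finite.of_injective ev hevinj
  · intro x
    refine ⟨N + 1, ?_⟩
    apply hevinj
    rw [map_nsmul, hz, map_zero]

end partc2


section parta
variable {p : ℕ} [Fact p.Prime] {A : Type} [AddCommGroup A]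

lemma tate_pow_smul (x : Tate p A) : ∀ n, p ^ n • x.1 n = x.1 0 := by
  intro n
  induction n with
  | zero => rw [pow_zero, one_smul]
  | succ n ih => rw [pow_succ, mul_smul, x.2.2 n, ih]

lemma toZModPow_val_congr (z : ℤ_[p]) {a b : ℕ} (h : a ≤ b) :
    (PadicInt.toZModPow b z).val ≡ (PadicInt.toZModPow a z).val [MOD p ^ a] := by
  haveI : NeZero (p ^ a) := ⟨pow_ne_zero _ (Fact.out : p.Prime).ne_zero⟩
  have hcomp := RingHom.congr_fun (PadicInt.zmod_cast_comp_toZModPow a b h) z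
  rw [RingHom.comp_apply] at hcomp
  rw [← ZMod.natCast_eq_natCast_iff, ZMod.natCast_val, ZMod.natCast_val, ZMod.cast_id,
    ← ZMod.castHom_apply (h := pow_dvd_pow p h) (PadicInt.toZModPow b z), hcomp]

lemma zmod_add_smul {m : ℕ} [NeZero m] {a : A} (h : m • a = 0) (u v : ZMod m) :
    (u + v).val • a = u.val • a + v.val • a := by
  rw [← add_smul]
  apply smul_congr_mod h
  rw [ZMod.val_add]
  exact Nat.mod_modEq _ _

lemma zmod_mul_smul {m : ℕ} [NeZero m] {a : A} (h : m • a = 0) (u v : ZMod m) :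
    (u * v).val • a = u.val • v.val • a := by
  rw [← mul_smul]
  apply smul_congr_mod h
  rw [ZMod.val_mul]
  exact Nat.mod_modEq _ _

/-- The scalar action of `ℤ_[p]` on the Tate module. -/
noncomputable def tateSmul (z : ℤ_[p]) (x : Tate p A) : Tate p A :=
  ⟨fun n => (PadicInt.toZModPow (n + 1) z).val • x.1 n, by
    refine ⟨fun n => ?_, fun n => ?_⟩
    · rw [smul_comm, x.2.1 n, smul_zero]
    · have hx := x.2.1 (n + 1)
      have hcong : p * (PadicInt.toZModPow (n + 2) z).val ≡
          p * (PadicInt.toZModPow (n + 1) z).val [MOD p ^ (n + 2)] := by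
        have h0 := toZModPow_val_congr (p := p) z (Nat.le_succ (n + 1))
        have := h0.mul_left' (c := p)
        rwa [← pow_succ'] at this
      calc p • (PadicInt.toZModPow (n + 2) z).val • x.1 (n + 1)
          = (p * (PadicInt.toZModPow (n + 2) z).val) • x.1 (n + 1) := by rw [mul_smul]
        _ = (p * (PadicInt.toZModPow (n + 1) z).val) • x.1 (n + 1) :=
            smul_congr_mod hx hcong
        _ = ((PadicInt.toZModPow (n + 1) z).val * p) • x.1 (n + 1) := by rw [mul_comm]
        _ = (PadicInt.toZModPow (n + 1) z).val • (p • x.1 (n + 1)) := by rw [mul_smul]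
        _ = (PadicInt.toZModPow (n + 1) z).val • x.1 n := by rw [x.2.2 n]⟩

noncomputable instance tateSMulInst : SMul ℤ_[p] (Tate p A) := ⟨tateSmul⟩

lemma tateSmul_coe (z : ℤ_[p]) (x : Tate p A) (n : ℕ) :
    (z • x).1 n = (PadicInt.toZModPow (n + 1) z).val • x.1 n := rfl

instance tateNeZero (n : ℕ) : NeZero (p ^ (n + 1)) :=
  ⟨pow_ne_zero _ (Fact.out : p.Prime).ne_zero⟩

noncomputable instance tateModule : Module ℤ_[p] (Tate p A) := by
  refine Module.ofMinimalAxioms (fun z x y => ?_) (fun z w x => ?_) (fun z w x => ?_)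
    (fun x => ?_)
  · apply Subtype.ext; funext n
    show (PadicInt.toZModPow (n + 1) z).val • (x.1 n + y.1 n) = _
    rw [smul_add]
    rfl
  · apply Subtype.ext; funext n
    show (PadicInt.toZModPow (n + 1) (z + w)).val • x.1 n = _
    rw [map_add, zmod_add_smul (x.2.1 n)]
    rfl
  · apply Subtype.ext; funext n
    show (PadicInt.toZModPow (n + 1) (z * w)).val • x.1 n = _
    rw [map_mul, zmod_mul_smul (x.2.1 n)]
    rfl
  · apply Subtype.ext; funext n
    show (PadicInt.toZModPow (n + 1) (1 : ℤ_[p])).val • x.1 n = x.1 n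
    haveI : Fact (1 < p ^ (n + 1)) :=
      ⟨Nat.one_lt_pow (Nat.succ_ne_zero n) (Fact.out : p.Prime).one_lt⟩
    rw [map_one, ZMod.val_one, one_smul]

lemma tate_natCast_smul (m : ℕ) (x : Tate p A) : ((m : ℤ_[p]) • x) = m • x := by
  apply Subtype.ext; funext n
  show (PadicInt.toZModPow (n + 1) (m : ℤ_[p])).val • x.1 n = (m • x).1 n
  have : (m • x).1 n = m • x.1 n := rfl
  rw [this, map_natCast, ZMod.val_natCast]
  exact smul_congr_mod (x.2.1 n) (Nat.mod_modEq _ _)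

lemma tate_p_torsionfree (x : Tate p A) (h : p • x = 0) : x = 0 := by
  have h' : ∀ n, p • x.1 n = 0 := fun n => congrFun (congrArg Subtype.val h) n
  apply Subtype.ext; funext n
  show x.1 n = 0
  rw [← x.2.2 n]
  exact h' (n + 1)

lemma tate_pow_torsionfree (x : Tate p A) (n : ℕ) (h : p ^ n • x = 0) : x = 0 := by
  induction n with
  | zero => rwa [pow_zero, one_smul] at h
  | succ n ih =>
    rw [pow_succ', mul_smul] at h
    exact ih (tate_p_torsionfree _ h)

set_option synthInstance.maxHeartbeats 1000000 in
instance tateNoZeroSMul : NoZeroSMulDivisors ℤ_[p] (Tate p A) := by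
  refine ⟨fun {z x} h => ?_⟩
  by_cases hz : z = 0
  · exact Or.inl hz
  · refine Or.inr ?_
    obtain ⟨n, u, rfl⟩ := IsDiscreteValuationRing.eq_unit_mul_pow_irreducible hz
      (PadicInt.prime_p).irreducible
    rw [mul_smul] at h
    have h2 : (p : ℤ_[p]) ^ n • x = 0 := by
      have := congrArg (fun y => (↑u⁻¹ : ℤ_[p]) • y) h
      simpa [← mul_smul, ← Units.val_mul] using this
    have h3 : ((p ^ n : ℕ) : ℤ_[p]) • x = 0 := by rwa [Nat.cast_pow]
    rw [tate_natCast_smul] at h3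
    exact tate_pow_torsionfree x n h3

end parta


section parta2
variable {p : ℕ} [Fact p.Prime] {A : Type} [AddCommGroup A]

lemma tate_coe_nsmul (m : ℕ) (y : Tate p A) : ((m • y : Tate p A) : ℕ → A) = m • (y : ℕ → A) :=
  map_nsmul (Tate p A).subtype m y

lemma tate_shift (x : Tate p A) (h0 : x.1 0 = 0) : ∃ y : Tate p A, x = p • y := by
  refine ⟨⟨fun n => x.1 (n + 1), ⟨fun n => ?_, fun n => x.2.2 (n + 1)⟩⟩, ?_⟩
  · show p ^ (n + 1) • x.1 (n + 1) = 0
    rw [tate_pow_smul x (n + 1), h0]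
  · apply Subtype.ext
    rw [tate_coe_nsmul]
    funext n
    show x.1 n = p • x.1 (n + 1)
    exact (x.2.2 n).symm

set_option maxHeartbeats 1600000 in
lemma tate_span (h1 : Finite (torsSub p A)) :
    ∃ (k : ℕ) (g : Fin k → Tate p A), ∀ x : Tate p A, ∃ c : Fin k → ℤ_[p],
      x = ∑ i, c i • g i := by
  classical
  have hS : (Set.range fun x : Tate p A => x.1 0).Finite := by
    have hsub : (Set.range fun x : Tate p A => x.1 0) ⊆ (torsSub p A : Set A) := by
      rintro - ⟨x, rfl⟩
      show p • x.1 0 = 0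
      have := x.2.1 0
      rwa [pow_one] at this
    haveI := h1
    exact Set.Finite.subset (Set.toFinite _) hsub
  obtain ⟨k, f, hf⟩ := hS.fin_embedding
  have hexists : ∀ i : Fin k, ∃ x : Tate p A, x.1 0 = f i := by
    intro i
    have : (f i) ∈ Set.range fun x : Tate p A => x.1 0 := by
      rw [← hf]; exact Set.mem_range_self i
    exact this
  choose g hg using hexists
  have hcover : ∀ x : Tate p A, ∃ i, (g i).1 0 = x.1 0 := by
    intro x
    have hx : x.1 0 ∈ Set.range f := by rw [hf]; exact ⟨x, rfl⟩
    obtain ⟨i, hi⟩ := hx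
    exact ⟨i, by rw [hg i, hi]⟩
  refine ⟨k, g, fun x => ?_⟩
  have hstep : ∀ v : Tate p A, ∃ w : (Tate p A) × (Fin k), v = g w.2 + p • w.1 := by
    intro v
    obtain ⟨i, hi⟩ := hcover v
    obtain ⟨y, hy⟩ := tate_shift (v - g i) (show v.1 0 - (g i).1 0 = 0 by rw [hi, sub_self])
    exact ⟨⟨y, i⟩, by rw [← hy]; abel⟩
  choose F hF using hstep
  set Y : ℕ → Tate p A := fun n => Nat.rec x (fun _ v => (F v).1) n with hY
  set j : ℕ → Fin k := fun n => (F (Y n)).2 with hj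
  have hYs : ∀ n, Y n = g (j n) + p • Y (n + 1) := fun n => hF (Y n)
  have htel : ∀ n, x = (∑ m ∈ Finset.range n, p ^ m • g (j m)) + p ^ n • Y n := by
    intro n
    induction n with
    | zero =>
      rw [Finset.range_zero, Finset.sum_empty, pow_zero, one_smul, zero_add]
      rfl
    | succ n ih =>
      rw [Finset.sum_range_succ]
      calc x = (∑ m ∈ Finset.range n, p ^ m • g (j m)) + p ^ n • Y n := ih
        _ = _ := by
          rw [hYs n, smul_add, smul_smul, ← pow_succ]
          abel
  -- summability of the coefficient series
  have hsum : ∀ t : ℕ → ℤ_[p], (∀ m, ‖t m‖ ≤ 1) →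
      Summable (fun m : ℕ => t m * (p : ℤ_[p]) ^ m) := by
    intro t ht
    have hp1 : (1 : ℝ) < p := by exact_mod_cast (Fact.out : p.Prime).one_lt
    refine Summable.of_norm_bounded (g := fun m => ((p : ℝ)⁻¹) ^ m)
      (summable_geometric_of_lt_one (by positivity) ?_) ?_
    · exact inv_lt_one_of_one_lt₀ hp1
    · intro m
      rw [norm_mul, norm_pow, PadicInt.norm_p]
      calc ‖t m‖ * ((p : ℝ)⁻¹) ^ m ≤ 1 * ((p : ℝ)⁻¹) ^ m := by
            gcongr
            exact ht m
        _ = ((p : ℝ)⁻¹) ^ m := one_mul _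
  classical
  set ind : Fin k → ℕ → ℤ_[p] := fun i m => if j m = i then 1 else 0 with hind
  have hindnorm : ∀ (i : Fin k) (m : ℕ), ‖ind i m‖ ≤ 1 := by
    intro i m
    rw [hind]
    dsimp only
    split <;> simp
  set c : Fin k → ℤ_[p] := fun i => ∑' m, ind i m * (p : ℤ_[p]) ^ m with hc
  refine ⟨c, ?_⟩
  apply Subtype.ext
  funext n
  -- the natural-number partial coefficients
  set Nn : Fin k → ℕ := fun i => ∑ m ∈ Finset.range (n + 1), if j m = i then p ^ m else 0
    with hNn
  -- right-hand side, componentwise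
  have hRHS : ((∑ i, c i • g i : Tate p A) : ℕ → A) n =
      ∑ i, (PadicInt.toZModPow (n + 1) (c i)).val • (g i).1 n := by
    have e1 : ((∑ i, c i • g i : Tate p A) : ℕ → A) = ∑ i, ((c i • g i : Tate p A) : ℕ → A) := by
      have := map_sum (Tate p A).subtype (fun i => c i • g i) Finset.univ
      simpa using this
    rw [e1, Finset.sum_apply]
    rfl
  have hval : ∀ i, (PadicInt.toZModPow (n + 1) (c i)).val • (g i).1 n = Nn i • (g i).1 n := by
    intro i
    apply smul_congr_mod ((g i).2.1 n)
    rw [← ZMod.natCast_eq_natCast_iff, ZMod.natCast_val, ZMod.cast_id]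
    have hsplit : c i = (∑ m ∈ Finset.range (n + 1), ind i m * (p : ℤ_[p]) ^ m)
        + (p : ℤ_[p]) ^ (n + 1) * ∑' m, ind i (m + (n + 1)) * (p : ℤ_[p]) ^ m := by
      have h1' := Summable.sum_add_tsum_nat_add (f := fun m => ind i m * (p : ℤ_[p]) ^ m) (n + 1)
        (hsum _ (hindnorm i))
      rw [hc]
      dsimp only
      rw [← h1']
      congr 1
      calc ∑' m, ind i (m + (n + 1)) * (p : ℤ_[p]) ^ (m + (n + 1))
          = ∑' m, (p : ℤ_[p]) ^ (n + 1) * (ind i (m + (n + 1)) * (p : ℤ_[p]) ^ m) := by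
            apply tsum_congr
            intro m
            rw [pow_add]
            ring
        _ = (p : ℤ_[p]) ^ (n + 1) * ∑' m, ind i (m + (n + 1)) * (p : ℤ_[p]) ^ m :=
            Summable.tsum_mul_left _ (hsum _ (fun m => hindnorm i (m + (n + 1))))
    rw [hsplit, map_add, map_mul, map_pow, map_natCast, ← Nat.cast_pow, ZMod.natCast_self,
      zero_mul, add_zero, map_sum]
    have hcast : ((Nn i : ℕ) : ZMod (p ^ (n + 1))) =
        ∑ m ∈ Finset.range (n + 1), if j m = i then ((p : ZMod (p ^ (n + 1)))) ^ m else 0 := by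
      rw [hNn]
      rw [Nat.cast_sum]
      apply Finset.sum_congr rfl
      intro m _
      rw [apply_ite (Nat.cast : ℕ → ZMod (p ^ (n + 1))), Nat.cast_pow, Nat.cast_zero]
    rw [hcast]
    apply Finset.sum_congr rfl
    intro m _
    rw [map_mul, map_pow, map_natCast, hind]
    dsimp only
    rw [apply_ite (PadicInt.toZModPow (n + 1)), map_one, map_zero, ite_mul, one_mul, zero_mul]
  have hswap : ∑ i, Nn i • (g i).1 n = ∑ m ∈ Finset.range (n + 1), p ^ m • (g (j m)).1 n := by
    calc ∑ i, Nn i • (g i).1 n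
        = ∑ i, ∑ m ∈ Finset.range (n + 1), (if j m = i then p ^ m else 0) • (g i).1 n := by
          apply Finset.sum_congr rfl
          intro i _
          rw [hNn]
          dsimp only
          rw [Finset.sum_smul]
      _ = ∑ m ∈ Finset.range (n + 1), ∑ i, (if j m = i then p ^ m else 0) • (g i).1 n :=
          Finset.sum_comm
      _ = ∑ m ∈ Finset.range (n + 1), p ^ m • (g (j m)).1 n := by
          apply Finset.sum_congr rfl
          intro m _
          have h2' : ∀ i : Fin k, (if j m = i then p ^ m else 0) • (g i).1 n =
              if j m = i then p ^ m • (g i).1 n else 0 := by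
            intro i
            split <;> simp
          rw [Finset.sum_congr rfl (fun i _ => h2' i), Finset.sum_ite_eq]
          simp
  -- left-hand side via the telescope at level n+1
  have hx := congrFun (congrArg Subtype.val (htel (n + 1))) n
  have hY0 : ((p ^ (n + 1) • Y (n + 1) : Tate p A) : ℕ → A) n = 0 := by
    rw [tate_coe_nsmul]
    exact (Y (n + 1)).2.1 n
  have hsumcoe : ((∑ m ∈ Finset.range (n + 1), p ^ m • g (j m) : Tate p A) : ℕ → A) n =
      ∑ m ∈ Finset.range (n + 1), p ^ m • (g (j m)).1 n := by
    have e1 : ((∑ m ∈ Finset.range (n + 1), p ^ m • g (j m) : Tate p A) : ℕ → A) =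
        ∑ m ∈ Finset.range (n + 1), ((p ^ m • g (j m) : Tate p A) : ℕ → A) := by
      have := map_sum (Tate p A).subtype (fun m => p ^ m • g (j m)) (Finset.range (n + 1))
      simpa using this
    rw [e1, Finset.sum_apply]
    apply Finset.sum_congr rfl
    intro m _
    rw [tate_coe_nsmul]
    rfl
  have hadd : ((∑ m ∈ Finset.range (n + 1), p ^ m • g (j m) : Tate p A) +
      p ^ (n + 1) • Y (n + 1) : Tate p A).1 n =
      ((∑ m ∈ Finset.range (n + 1), p ^ m • g (j m) : Tate p A) : ℕ → A) n +
      ((p ^ (n + 1) • Y (n + 1) : Tate p A) : ℕ → A) n := rfl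
  rw [hadd, hY0, add_zero, hsumcoe] at hx
  rw [hRHS, Finset.sum_congr rfl (fun i _ => hval i), hswap]
  exact hx

end parta2


section parta3
variable {p : ℕ} [Fact p.Prime] {A : Type} [AddCommGroup A]

lemma partA (h1 : Finite (torsSub p A)) :
    ∃ r : ℕ, Nonempty ((Tate p A) ≃+ (Fin r → ℤ_[p])) := by
  classical
  obtain ⟨k, g, hgen⟩ := tate_span (p := p) (A := A) h1
  haveI : Module.Finite ℤ_[p] (Tate p A) := by
    refine ⟨⟨Finset.image g Finset.univ, ?_⟩⟩
    rw [Finset.coe_image, Finset.coe_univ, Set.image_univ]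
    apply le_antisymm le_top
    intro x _
    obtain ⟨c, rfl⟩ := hgen x
    exact Submodule.sum_mem _ fun i _ =>
      Submodule.smul_mem _ _ (Submodule.subset_span (Set.mem_range_self i))
  haveI : Module.Free ℤ_[p] (Tate p A) := Module.free_of_finite_type_torsion_free'
  refine ⟨Fintype.card (Module.Free.ChooseBasisIndex ℤ_[p] (Tate p A)), ⟨?_⟩⟩
  exact ((Module.Free.chooseBasis ℤ_[p] (Tate p A)).equivFun.trans
    (LinearEquiv.funCongrLeft ℤ_[p] ℤ_[p]
      (Fintype.equivFin (Module.Free.ChooseBasisIndex ℤ_[p] (Tate p A))).symm)).toAddEquiv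

end parta3

/-- If `A` is a `p`-power torsion abelian group with `A[p]` and `A/pA`
finite, then: (a) the Tate module `T_p A` is a finite free `ℤ_p`-module; (b) the inverse
system `{A[p^n]}` with multiplication-by-`p`-power transition maps satisfies the
Mittag–Leffler condition; (c) the `p`-adic completion of `A` is isomorphic to
`ℤ_p^{⊕s} ⊕ F'` for some `s : ℕ` and finite abelian `p`-group `F'`. -/
theorem statement3 (p : ℕ) [Fact p.Prime] (A : Type) [AddCommGroup A]
    (hA : ∀ a : A, ∃ n : ℕ, p ^ n • a = 0)
    (h1 : Finite (torsSub p A)) (h2 : Finite (A ⧸ mulRange p A)) :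
    (∃ r : ℕ, Nonempty ((Tate p A) ≃+ (Fin r → ℤ_[p]))) ∧
      (∀ n : ℕ, 1 ≤ n → ∃ m : ℕ, n ≤ m ∧ ∀ m' : ℕ, m ≤ m' →
          (fun x : A => p ^ (m' - n) • x) '' {x : A | p ^ m' • x = 0} =
            (fun x : A => p ^ (m - n) • x) '' {x : A | p ^ m • x = 0}) ∧
      (∃ (s : ℕ) (F' : Type) (_ : AddCommGroup F') (_ : Finite F'),
          (∀ x : F', ∃ n : ℕ, p ^ n • x = 0) ∧
            Nonempty ((Completion p A) ≃+ ((Fin s → ℤ_[p]) × F'))) := by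
  refine ⟨partA h1, fun n hn => partB h1 n hn, ?_⟩
  obtain ⟨hfin, htors⟩ := completion_props hA h1 h2
  refine ⟨0, Completion p A, inferInstance, hfin, htors, ⟨?_⟩⟩
  exact ⟨⟨fun x => (0, x), Prod.snd, fun x => rfl,
    fun y => Prod.ext (Subsingleton.elim _ _) rfl⟩,
    fun a b => Prod.ext (by simp) rfl⟩
end

section
/- Let p be a prime and A a p-power torsion abelian group. Suppose that: (a) the Tate module T_pA is isomorphic as an abelian group to ℤ_p^{⊕e} for some natural number e; (b) the p-adic completion Â = lim_n A/p^nA is isomorphic as an abelian group to ℤ_p^{⊕s} ⊕ F' for some natural number s and finite abelian p-group F'; and (c) the inverse system {A[p^n]}_{n≥1} with multiplication-by-p transition maps satisfies the Mittag–Leffler condition, i.e. for every n ≥ 1 there exists m ≥ n such that for all m' ≥ m the image of the map A[p^{m'}] → A[p^n], x ↦ p^{m'−n}·x, equals the image of the map A[p^m] → A[p^n], x ↦ p^{m−n}·x. Then there exists a finite abelian p-group F such that A is isomorphic as an abelian group to (ℚ_p/ℤ_p)^{⊕e} ⊕ F. -/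
set_option linter.unusedSectionVars false
set_option maxHeartbeats 1600000

section Aux2
variable {p : ℕ} [Fact p.Prime] {A : Type*} [AddCommGroup A]

def divSub (p : ℕ) (A : Type*) [AddCommGroup A] : AddSubgroup A where
  carrier := {x | ∀ n : ℕ, ∃ y : A, p ^ n • y = x}
  zero_mem' := fun n => ⟨0, smul_zero _⟩
  add_mem' := by
    rintro a b ha hb n
    obtain ⟨y, hy⟩ := ha n; obtain ⟨z, hz⟩ := hb n
    exact ⟨y + z, by rw [smul_add, hy, hz]⟩
  neg_mem' := by
    rintro a ha n
    obtain ⟨y, hy⟩ := ha n; exact ⟨-y, by rw [smul_neg, hy]⟩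

lemma mem_divSub {x : A} : x ∈ divSub p A ↔ ∀ n : ℕ, ∃ y : A, p ^ n • y = x := Iff.rfl

lemma divSub_pdiv (hA : ∀ a : A, ∃ n : ℕ, p ^ n • a = 0)
    (hc : ∀ n : ℕ, 1 ≤ n → ∃ m : ℕ, n ≤ m ∧ ∀ m' : ℕ, m ≤ m' →
        (fun x : A => p ^ (m' - n) • x) '' {x : A | p ^ m' • x = 0} =
          (fun x : A => p ^ (m - n) • x) '' {x : A | p ^ m • x = 0})
    {x : A} (hx : x ∈ divSub p A) : ∃ z ∈ divSub p A, p • z = x := by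
  obtain ⟨k, hk⟩ := hA x
  obtain ⟨m, hm, hstab⟩ := hc (k + 1) (by omega)
  obtain ⟨y, hy⟩ := hx (m - k)
  have hym : p ^ m • y = 0 := by
    have h5 : p ^ m • y = p ^ k • (p ^ (m - k) • y) := by
      rw [← mul_smul, ← pow_add, show k + (m - k) = m by omega]
    rw [h5, hy, hk]
  set z := p ^ (m - (k + 1)) • y with hz
  have hpz : p • z = x := by
    rw [hz, ← mul_smul, show p * p ^ (m - (k+1)) = p ^ (m - k) by
      rw [← pow_succ', show m - (k+1) + 1 = m - k by omega]]
    exact hy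
  refine ⟨z, ?_, hpz⟩
  intro n
  have h1 : z ∈ (fun x : A => p ^ (m - (k+1)) • x) '' {x : A | p ^ m • x = 0} :=
    ⟨y, hym, rfl⟩
  have h2 := (hstab (m + n) (by omega)).symm
  rw [h2] at h1
  obtain ⟨w, hw, hwz⟩ := h1
  refine ⟨p ^ (m + n - (k + 1) - n) • w, ?_⟩
  rw [← mul_smul, ← pow_add]
  rw [show n + (m + n - (k+1) - n) = m + n - (k+1) by omega]
  exact hwz

lemma divSub_pow_div (hA : ∀ a : A, ∃ n : ℕ, p ^ n • a = 0)
    (hc : ∀ n : ℕ, 1 ≤ n → ∃ m : ℕ, n ≤ m ∧ ∀ m' : ℕ, m ≤ m' →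
        (fun x : A => p ^ (m' - n) • x) '' {x : A | p ^ m' • x = 0} =
          (fun x : A => p ^ (m - n) • x) '' {x : A | p ^ m • x = 0})
    (n : ℕ) : ∀ x ∈ divSub p A, ∃ z ∈ divSub p A, p ^ n • z = x := by
  induction n with
  | zero => exact fun x hx => ⟨x, hx, by rw [pow_zero, one_smul]⟩
  | succ n ih =>
    intro x hx
    obtain ⟨z, hz, hzx⟩ := divSub_pdiv hA hc hx
    obtain ⟨w, hw, hwz⟩ := ih z hz
    refine ⟨w, hw, ?_⟩
    rw [pow_succ', mul_smul, hwz, hzx]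

lemma divSub_nat_div (hA : ∀ a : A, ∃ n : ℕ, p ^ n • a = 0)
    (hc : ∀ n : ℕ, 1 ≤ n → ∃ m : ℕ, n ≤ m ∧ ∀ m' : ℕ, m ≤ m' →
        (fun x : A => p ^ (m' - n) • x) '' {x : A | p ^ m' • x = 0} =
          (fun x : A => p ^ (m - n) • x) '' {x : A | p ^ m • x = 0}) :
    ∀ n : ℕ, n ≠ 0 → ∀ x ∈ divSub p A, ∃ z ∈ divSub p A, n • z = x := by
  have hp := (Fact.out : p.Prime)
  intro n
  induction n using Nat.strong_induction_on with
  | _ n ih =>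
    intro hn x hx
    by_cases hpn : p ∣ n
    · obtain ⟨n', rfl⟩ := hpn
      have hn' : n' ≠ 0 := by rintro rfl; simp at hn
      have hlt : n' < p * n' := by
        have h2 := hp.two_le
        have h3 := Nat.pos_of_ne_zero hn'
        nlinarith
      obtain ⟨z', hz', hz'x⟩ := ih n' hlt hn' x hx
      obtain ⟨z, hz, hzz⟩ := divSub_pdiv hA hc hz'
      refine ⟨z, hz, ?_⟩
      rw [show p * n' = n' * p from mul_comm _ _, mul_smul, hzz, hz'x]
    · obtain ⟨k, hk⟩ := hA x
      have hcop : Nat.Coprime n (p ^ k) :=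
        Nat.Coprime.pow_right k ((Nat.Prime.coprime_iff_not_dvd hp).mpr hpn).symm
      have hcopz : IsCoprime (n : ℤ) ((p : ℤ) ^ k) := by
        rw [show ((p : ℤ)) ^ k = ((p ^ k : ℕ) : ℤ) by push_cast; ring]
        exact Int.isCoprime_iff_gcd_eq_one.mpr hcop
      obtain ⟨a, b, hab⟩ := hcopz
      refine ⟨a • x, AddSubgroup.zsmul_mem _ hx a, ?_⟩
      have : (n : ℤ) • (a • x) = x := by
        rw [← mul_smul]
        have : (↑n * a) • x = (1 - b * (p:ℤ)^k) • x := by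
          congr 1; linarith
        rw [this, sub_smul, one_smul, mul_smul]
        have hkz : ((p:ℤ)^k) • x = 0 := by
          rw [show ((p:ℤ))^k = ((p^k : ℕ) : ℤ) by push_cast; ring, natCast_zsmul, hk]
        rw [hkz, smul_zero, sub_zero]
      rwa [natCast_zsmul] at this

lemma divSub_int_div (hA : ∀ a : A, ∃ n : ℕ, p ^ n • a = 0)
    (hc : ∀ n : ℕ, 1 ≤ n → ∃ m : ℕ, n ≤ m ∧ ∀ m' : ℕ, m ≤ m' →
        (fun x : A => p ^ (m' - n) • x) '' {x : A | p ^ m' • x = 0} =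
          (fun x : A => p ^ (m - n) • x) '' {x : A | p ^ m • x = 0}) :
    ∀ m : ℤ, m ≠ 0 → ∀ x ∈ divSub p A, ∃ z ∈ divSub p A, m • z = x := by
  intro m hm x hx
  have hna : m.natAbs ≠ 0 := by simpa using hm
  obtain ⟨z, hz, hzx⟩ := divSub_nat_div hA hc m.natAbs hna x hx
  rcases Int.natAbs_eq m with h | h
  · exact ⟨z, hz, by rw [h, natCast_zsmul, hzx]⟩
  · exact ⟨-z, AddSubgroup.neg_mem _ hz, by rw [h, neg_smul, smul_neg, neg_neg, natCast_zsmul, hzx]⟩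

end Aux2

section Aux3
variable {p : ℕ} [Fact p.Prime] {A : Type*} [AddCommGroup A]

lemma tate_pow_smul_s4 {t : ℕ → A} (ht : t ∈ Tate p A) (n j : ℕ) :
    p ^ j • t (n + j) = t n := by
  induction j with
  | zero => simp
  | succ j ih =>
    rw [pow_succ, mul_smul, show n + (j+1) = (n+j) + 1 by omega, ht.2 (n + j), ih]

lemma tate_mem_divSub {t : ℕ → A} (ht : t ∈ Tate p A) (n : ℕ) :
    t n ∈ divSub p A := fun j => ⟨t (n + j), tate_pow_smul_s4 ht n j⟩

lemma tate_shift_s4 {t : ℕ → A} (ht : t ∈ Tate p A) (h0 : t 0 = 0) :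
    ∃ s ∈ Tate p A, (∀ k, s k = t (k + 1)) := by
  refine ⟨fun k => t (k + 1), ⟨fun n => ?_, fun n => ht.2 (n + 1)⟩, fun k => rfl⟩
  have : p ^ (n + 1) • t (n + 1) = t 0 := by
    have h := tate_pow_smul_s4 ht 0 (n + 1)
    rwa [zero_add] at h
  rw [this, h0]

lemma tate_lift (hpd : ∀ x ∈ divSub p A, ∃ z ∈ divSub p A, p • z = x)
    {b : A} (hb : b ∈ divSub p A) (n : ℕ) (hbn : p ^ (n + 1) • b = 0) :
    ∃ t ∈ Tate p A, t n = b := by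
  have key : ∀ x : A, ∃ z : A, x ∈ divSub p A → (z ∈ divSub p A ∧ p • z = x) := by
    intro x
    by_cases hx : x ∈ divSub p A
    · obtain ⟨z, hz, hzx⟩ := hpd x hx
      exact ⟨z, fun _ => ⟨hz, hzx⟩⟩
    · exact ⟨0, fun h => absurd h hx⟩
  choose L hL using key
  set r : ℕ → A := fun j => L^[j] b with hrdef
  have hrmem : ∀ j, r j ∈ divSub p A := by
    intro j
    induction j with
    | zero => exact hb
    | succ j ih =>
      rw [hrdef]
      simp only [Function.iterate_succ_apply']
      exact (hL _ ih).1
  have hstep : ∀ j, p • r (j + 1) = r j := by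
    intro j
    have : r (j + 1) = L (r j) := by rw [hrdef]; simp [Function.iterate_succ_apply']
    rw [this]
    exact (hL _ (hrmem j)).2
  have hback : ∀ j, p ^ j • r j = b := by
    intro j
    induction j with
    | zero => simp [hrdef]
    | succ j ih => rw [pow_succ, mul_smul, hstep j, ih]
  refine ⟨fun k => if k ≤ n then p ^ (n - k) • b else r (k - n), ⟨fun k => ?_, fun k => ?_⟩, ?_⟩
  · by_cases hk : k ≤ n
    · simp only [if_pos hk]
      rw [← mul_smul, ← pow_add, show k + 1 + (n - k) = n + 1 by omega, hbn]
    · simp only [if_neg hk]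
      have h1 : p ^ (k - n) • r (k - n) = b := hback (k - n)
      have : p ^ (k + 1) • r (k - n) = p ^ (n + 1) • (p ^ (k - n) • r (k - n)) := by
        rw [← mul_smul, ← pow_add, show n + 1 + (k - n) = k + 1 by omega]
      rw [this, h1, hbn]
  · by_cases hk : k + 1 ≤ n
    · simp only [if_pos hk, if_pos (by omega : k ≤ n)]
      rw [← mul_smul, ← pow_succ', show n - k = (n - (k+1)) + 1 by omega]
    · by_cases hk2 : k ≤ n
      · -- k = n
        have hkn : k = n := by omega
        subst hkn
        simp only [if_neg hk, if_pos le_rfl]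
        rw [show k + 1 - k = 1 by omega, show k - k = 0 by omega, pow_zero, one_smul]
        have : r 1 = L (r 0) := by rw [hrdef]; simp
        rw [show (1 : ℕ) = 0 + 1 from rfl, hstep 0]
        simp [hrdef]
      · simp only [if_neg hk, if_neg hk2]
        rw [show k + 1 - n = (k - n) + 1 by omega]
        exact hstep (k - n)
  · simp

lemma exists_retraction (hdiv : ∀ m : ℤ, m ≠ 0 → ∀ x ∈ divSub p A, ∃ z ∈ divSub p A, m • z = x) :
    ∃ r : A →+ ↥(divSub p A), ∀ b : ↥(divSub p A), r ↑b = b := by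
  have key : ∀ (x : ↥(divSub p A)) (m : ℤ), m ≠ 0 → ∃ z : ↥(divSub p A), m • z = x := by
    rintro ⟨x, hx⟩ m hm
    obtain ⟨z, hz, hzx⟩ := hdiv m hm x hx
    exact ⟨⟨z, hz⟩, Subtype.ext (by simpa using hzx)⟩
  letI : DivisibleBy ↥(divSub p A) ℤ :=
    { div := fun x m => if h : m = 0 then 0 else (key x m h).choose
      div_zero := fun a => by exact dif_pos rfl
      div_cancel := fun {m} a hm => by
        simp only [dif_neg hm]
        exact (key a m hm).choose_spec }
  have baer := Module.Baer.of_divisible (↥(divSub p A))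
  obtain ⟨r, hr⟩ := baer.extension_property_addMonoidHom (divSub p A).subtype
    (divSub p A).subtype_injective (AddMonoidHom.id _)
  exact ⟨r, fun b => DFunLike.congr_fun hr b⟩

lemma equiv_prod_of_retraction {B : AddSubgroup A} (r : A →+ ↥B) (hr : ∀ b : ↥B, r ↑b = b) :
    Nonempty (A ≃+ ↥B × (A ⧸ B)) := by
  have hcoe : ∀ (a : A) (ha : a ∈ B), (↑(r a) : A) = a := by
    intro a ha
    have : r a = ⟨a, ha⟩ := hr ⟨a, ha⟩
    rw [this]
  set σ : A ⧸ B →+ A := QuotientAddGroup.lift B (AddMonoidHom.id A - B.subtype.comp r)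
    (by
      intro a ha
      show a - ((B.subtype) (r a)) = 0
      show a - (↑(r a) : A) = 0
      rw [hcoe a ha, sub_self]) with hσdef
  have hσ : ∀ a : A, σ (QuotientAddGroup.mk a) = a - ↑(r a) := by
    intro a
    rw [hσdef]
    rfl
  refine ⟨{ toFun := fun a => (r a, QuotientAddGroup.mk a)
            invFun := fun q => ↑q.1 + σ q.2
            left_inv := ?_
            right_inv := ?_
            map_add' := ?_ }⟩
  · intro a
    simp only [hσ a]
    abel
  · rintro ⟨b, q⟩
    induction q using QuotientAddGroup.induction_on with
    | H a =>
      simp only [hσ a]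
      refine Prod.ext ?_ ?_
      · show r (↑b + (a - ↑(r a))) = b
        rw [map_add, map_sub, hr b]
        have : r ((r a : A)) = r a := hr (r a)
        rw [this, sub_self, add_zero]
      · show QuotientAddGroup.mk (↑b + (a - ↑(r a))) = QuotientAddGroup.mk a
        rw [QuotientAddGroup.eq]
        have : -(↑b + (a - ↑(r a))) + a = -↑b + ↑(r a) := by abel
        rw [this]
        exact AddSubgroup.add_mem _ (AddSubgroup.neg_mem _ b.2) (r a).2
  · intro a b
    simp [Prod.ext_iff]

end Aux3

section Aux4
variable {p : ℕ} [Fact p.Prime] {A : Type*} [AddCommGroup A]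

lemma int_smul_eq_of_padic {u v : ℤ} {n : ℕ}
    (h : ((u : ℤ_[p]) - (v : ℤ_[p])) ∈ Ideal.span {((p : ℤ_[p])) ^ n}) {a : A}
    (ha : p ^ n • a = 0) : u • a = v • a := by
  rw [Ideal.mem_span_singleton] at h
  have h2 : ((p : ℤ_[p])) ^ n ∣ ((u - v : ℤ) : ℤ_[p]) := by push_cast; exact h
  rw [PadicInt.pow_p_dvd_int_iff] at h2
  obtain ⟨d, hd⟩ := h2
  have h1 : u • a - v • a = (u - v) • a := (sub_smul u v a).symm
  have h3 : (u - v) • a = 0 := by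
    rw [hd, mul_smul]
    rw [smul_comm]
    have h4 : ((p : ℤ) ^ n) • a = 0 := by
      rw [← Nat.cast_pow, natCast_zsmul]; exact ha
    rw [h4, smul_zero]
  exact sub_eq_zero.mp (h1.trans h3)

/-- `y * p^n` as a `p`-adic integer (junk value `0` if it is not integral). -/
noncomputable def clip (p : ℕ) [Fact p.Prime] (y : ℚ_[p]) (n : ℕ) : ℤ_[p] :=
  if h : ‖y * (p : ℚ_[p]) ^ n‖ ≤ 1 then ⟨y * (p : ℚ_[p]) ^ n, h⟩ else 0

lemma clip_coe {y : ℚ_[p]} {n : ℕ} (h : ‖y * (p : ℚ_[p]) ^ n‖ ≤ 1) :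
    (clip p y n : ℚ_[p]) = y * (p : ℚ_[p]) ^ n := by
  unfold clip
  exact congrArg Subtype.val (dif_pos h)

lemma norm_clip_step {y : ℚ_[p]} {n : ℕ} (h : ‖y * (p : ℚ_[p]) ^ n‖ ≤ 1) :
    ‖y * (p : ℚ_[p]) ^ (n + 1)‖ ≤ 1 := by
  have : y * (p : ℚ_[p]) ^ (n + 1) = (y * (p : ℚ_[p]) ^ n) * (p : ℚ_[p]) := by ring
  rw [this, norm_mul]
  have hp : ‖(p : ℚ_[p])‖ ≤ 1 := by
    rw [Padic.norm_p]
    have : (1 : ℝ) ≤ (p : ℝ) := by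
      have := (Fact.out : p.Prime).two_le
      exact_mod_cast by omega
    exact inv_le_one_of_one_le₀ this
  calc ‖y * (p : ℚ_[p]) ^ n‖ * ‖(p : ℚ_[p])‖ ≤ 1 * 1 :=
        mul_le_mul h hp (norm_nonneg _) zero_le_one
    _ = 1 := mul_one 1

lemma norm_clip_mono {y : ℚ_[p]} {n m : ℕ} (hnm : n ≤ m) (h : ‖y * (p : ℚ_[p]) ^ n‖ ≤ 1) :
    ‖y * (p : ℚ_[p]) ^ m‖ ≤ 1 := by
  induction m, hnm using Nat.le_induction with
  | base => exact h
  | succ m hm ih => exact norm_clip_step ih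

/-- The level-`n` approximation of the value of the Prüfer-group homomorphism attached to a
Tate sequence `t`. -/
noncomputable def gfun (p : ℕ) [Fact p.Prime] {A : Type*} [AddCommGroup A] (t : ℕ → A)
    (y : ℚ_[p]) (n : ℕ) : A :=
  (PadicInt.appr (clip p y n) n) • t (n - 1)

variable {t : ℕ → A}

lemma gfun_stab (ht1 : ∀ n, p ^ (n + 1) • t n = 0) (ht2 : ∀ n, p • t (n + 1) = t n)
    {y : ℚ_[p]} {n : ℕ} (hn : 1 ≤ n) (h : ‖y * (p : ℚ_[p]) ^ n‖ ≤ 1) :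
    gfun p t y (n + 1) = gfun p t y n := by
  have h1 := norm_clip_step h
  set c := clip p y n with hc
  set c' := clip p y (n + 1) with hc'
  have hcc : c' = (p : ℤ_[p]) * c := by
    have e : (c' : ℚ_[p]) = (((p : ℤ_[p]) * c : ℤ_[p]) : ℚ_[p]) := by
      rw [clip_coe h1, PadicInt.coe_mul, clip_coe h]
      push_cast
      ring
    exact Subtype.coe_injective e
  set a := PadicInt.appr c' (n + 1) with ha
  set b := PadicInt.appr c n with hb
  have d1 : (p : ℤ_[p]) ^ (n + 1) ∣ (c' - (a : ℤ_[p])) :=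
    Ideal.mem_span_singleton.mp (PadicInt.appr_spec (n + 1) c')
  have d2 : (p : ℤ_[p]) ^ n ∣ (c - (b : ℤ_[p])) :=
    Ideal.mem_span_singleton.mp (PadicInt.appr_spec n c)
  have d3 : (p : ℤ_[p]) ^ (n + 1) ∣ ((a : ℤ_[p]) - ((p * b : ℕ) : ℤ_[p])) := by
    have e1 : ((a : ℤ_[p]) - ((p * b : ℕ) : ℤ_[p])) =
        -(c' - (a : ℤ_[p])) + (p : ℤ_[p]) * (c - (b : ℤ_[p])) := by
      rw [hcc]; push_cast; ring
    rw [e1]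
    refine dvd_add (dvd_neg.mpr d1) ?_
    rw [pow_succ']
    exact mul_dvd_mul_left _ d2
  have step1 : (a : ℤ) • t n = ((p * b : ℕ) : ℤ) • t n := by
    apply int_smul_eq_of_padic (n := n + 1) _ (ht1 n)
    rw [Ideal.mem_span_singleton]
    have : ((a : ℤ) : ℤ_[p]) - (((p * b : ℕ) : ℤ) : ℤ_[p]) =
        (a : ℤ_[p]) - ((p * b : ℕ) : ℤ_[p]) := by push_cast; ring
    rw [this]
    exact d3
  have step2 : (p * b) • t n = b • t (n - 1) := by
    rw [mul_comm, mul_smul]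
    have hptn : p • t n = t (n - 1) := by
      have h := ht2 (n - 1)
      rwa [show n - 1 + 1 = n by omega] at h
    rw [hptn]
  show a • t ((n + 1) - 1) = b • t (n - 1)
  rw [show (n + 1) - 1 = n by omega]
  have := step1
  rw [natCast_zsmul, natCast_zsmul] at this
  rw [this, step2]

lemma gfun_stab' (ht1 : ∀ n, p ^ (n + 1) • t n = 0) (ht2 : ∀ n, p • t (n + 1) = t n)
    {y : ℚ_[p]} {n m : ℕ} (hn : 1 ≤ n) (hnm : n ≤ m) (h : ‖y * (p : ℚ_[p]) ^ n‖ ≤ 1) :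
    gfun p t y m = gfun p t y n := by
  induction m, hnm using Nat.le_induction with
  | base => rfl
  | succ m hm ih =>
    rw [gfun_stab ht1 ht2 (le_trans hn hm) (norm_clip_mono hm h), ih]

lemma exists_norm_le (y : ℚ_[p]) : ∃ n : ℕ, 1 ≤ n ∧ ‖y * (p : ℚ_[p]) ^ n‖ ≤ 1 := by
  have hp := (Fact.out : p.Prime)
  obtain ⟨k, hk⟩ := exists_nat_ge ‖y‖
  have hkp : (k : ℝ) ≤ (p : ℝ) ^ k := by
    have := Nat.lt_pow_self (n := k) hp.one_lt
    exact_mod_cast this.le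
  refine ⟨k + 1, by omega, ?_⟩
  rw [norm_mul, Padic.norm_p_pow]
  have hppos : (0 : ℝ) < (p : ℝ) := by exact_mod_cast hp.pos
  calc ‖y‖ * (p : ℝ) ^ (-(k + 1 : ℕ) : ℤ)
      ≤ (p : ℝ) ^ (k : ℤ) * (p : ℝ) ^ (-(k + 1 : ℕ) : ℤ) := by
        apply mul_le_mul_of_nonneg_right _ (zpow_nonneg hppos.le _)
        calc ‖y‖ ≤ k := hk
        _ ≤ (p : ℝ) ^ k := hkp
        _ = (p : ℝ) ^ (k : ℤ) := (zpow_natCast _ _).symm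
    _ = (p : ℝ) ^ ((k : ℤ) + (-(k + 1 : ℕ) : ℤ)) := (zpow_add₀ hppos.ne' _ _).symm
    _ = (p : ℝ) ^ (-1 : ℤ) := by norm_num
    _ ≤ 1 := by
        rw [zpow_neg_one]
        apply inv_le_one_of_one_le₀
        exact_mod_cast hp.two_le.trans (le_refl p) |>.trans' (by omega)

/-- Choice of an integrality level for `y`. -/
noncomputable def Nlev (p : ℕ) [Fact p.Prime] (y : ℚ_[p]) : ℕ :=
  (exists_norm_le y).choose

lemma Nlev_pos (y : ℚ_[p]) : 1 ≤ Nlev p y := (exists_norm_le y).choose_spec.1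

lemma Nlev_spec (y : ℚ_[p]) : ‖y * (p : ℚ_[p]) ^ (Nlev p y)‖ ≤ 1 :=
  (exists_norm_le y).choose_spec.2

lemma gfun_add (ht1 : ∀ n, p ^ (n + 1) • t n = 0) {x y : ℚ_[p]} {n : ℕ} (hn : 1 ≤ n)
    (hx : ‖x * (p : ℚ_[p]) ^ n‖ ≤ 1) (hy : ‖y * (p : ℚ_[p]) ^ n‖ ≤ 1) :
    gfun p t (x + y) n = gfun p t x n + gfun p t y n := by
  have hxy : ‖(x + y) * (p : ℚ_[p]) ^ n‖ ≤ 1 := by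
    rw [add_mul]
    exact le_trans (Padic.nonarchimedean _ _) (max_le hx hy)
  have hclip : clip p (x + y) n = clip p x n + clip p y n := by
    have e : ((clip p (x + y) n : ℤ_[p]) : ℚ_[p]) =
        ((clip p x n + clip p y n : ℤ_[p]) : ℚ_[p]) := by
      rw [PadicInt.coe_add, clip_coe hxy, clip_coe hx, clip_coe hy]
      ring
    exact Subtype.coe_injective e
  set c := clip p x n
  set d := clip p y n
  have key : ((PadicInt.appr (c + d) n : ℤ)) • t (n - 1) =
      ((PadicInt.appr c n + PadicInt.appr d n : ℕ) : ℤ) • t (n - 1) := by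
    refine int_smul_eq_of_padic (p := p) (n := n) ?_ ?_
    · rw [Ideal.mem_span_singleton]
      have e1 : (((PadicInt.appr (c + d) n : ℤ)) : ℤ_[p]) -
          ((((PadicInt.appr c n + PadicInt.appr d n : ℕ)) : ℤ) : ℤ_[p]) =
          ((c - PadicInt.appr c n) + (d - PadicInt.appr d n)) - ((c + d) - PadicInt.appr (c + d) n) := by
        push_cast; ring
      rw [e1]
      refine dvd_sub (dvd_add ?_ ?_) ?_ <;>
        exact Ideal.mem_span_singleton.mp (PadicInt.appr_spec n _)
    · have h := ht1 (n - 1)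
      rwa [show n - 1 + 1 = n by omega] at h
  show (PadicInt.appr (clip p (x + y) n) n) • t (n - 1) = _
  rw [hclip]
  rw [natCast_zsmul, natCast_zsmul] at key
  rw [key, add_smul]
  rfl

/-- The homomorphism `ℚ_[p] →+ A` attached to a Tate sequence `t`. -/
noncomputable def fpsi (p : ℕ) [Fact p.Prime] {A : Type*} [AddCommGroup A] (t : ℕ → A)
    (ht1 : ∀ n, p ^ (n + 1) • t n = 0) (ht2 : ∀ n, p • t (n + 1) = t n) : ℚ_[p] →+ A :=
  AddMonoidHom.mk' (fun y => gfun p t y (Nlev p y)) (by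
    intro x y
    set n := max (Nlev p (x + y)) (max (Nlev p x) (Nlev p y)) with hn
    have hn1 : 1 ≤ n := le_trans (Nlev_pos (x + y)) (le_max_left _ _)
    have hxn : ‖x * (p : ℚ_[p]) ^ n‖ ≤ 1 :=
      norm_clip_mono (le_trans (le_max_left _ _) (le_max_right _ _)) (Nlev_spec x)
    have hyn : ‖y * (p : ℚ_[p]) ^ n‖ ≤ 1 :=
      norm_clip_mono (le_trans (le_max_right _ _) (le_max_right _ _)) (Nlev_spec y)
    have e1 : gfun p t (x + y) (Nlev p (x + y)) = gfun p t (x + y) n :=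
      (gfun_stab' ht1 ht2 (Nlev_pos _) (le_max_left _ _) (Nlev_spec _)).symm
    have e2 : gfun p t x (Nlev p x) = gfun p t x n :=
      (gfun_stab' ht1 ht2 (Nlev_pos _) (le_trans (le_max_left _ _) (le_max_right _ _))
        (Nlev_spec _)).symm
    have e3 : gfun p t y (Nlev p y) = gfun p t y n :=
      (gfun_stab' ht1 ht2 (Nlev_pos _) (le_trans (le_max_right _ _) (le_max_right _ _))
        (Nlev_spec _)).symm
    show gfun p t (x + y) (Nlev p (x + y)) =
      gfun p t x (Nlev p x) + gfun p t y (Nlev p y)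
    rw [e1, e2, e3]
    exact gfun_add ht1 hn1 hxn hyn)

lemma fpsi_apply (t : ℕ → A) (ht1 : ∀ n, p ^ (n + 1) • t n = 0)
    (ht2 : ∀ n, p • t (n + 1) = t n) {y : ℚ_[p]} {n : ℕ} (hn : 1 ≤ n)
    (h : ‖y * (p : ℚ_[p]) ^ n‖ ≤ 1) :
    fpsi p t ht1 ht2 y = (PadicInt.appr (clip p y n) n) • t (n - 1) := by
  show gfun p t y (Nlev p y) = gfun p t y n
  set m := max (Nlev p y) n
  have e1 : gfun p t y m = gfun p t y (Nlev p y) :=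
    gfun_stab' ht1 ht2 (Nlev_pos _) (le_max_left _ _) (Nlev_spec _)
  have e2 : gfun p t y m = gfun p t y n :=
    gfun_stab' ht1 ht2 hn (le_max_right _ _) h
  rw [← e1, e2]

lemma fpsi_int (t : ℕ → A) (ht1 : ∀ n, p ^ (n + 1) • t n = 0)
    (ht2 : ∀ n, p • t (n + 1) = t n) {y : ℚ_[p]} (h : ‖y‖ ≤ 1) :
    fpsi p t ht1 ht2 y = 0 := by
  have h1 : ‖y * (p : ℚ_[p]) ^ 1‖ ≤ 1 := by
    rw [pow_one]
    have := norm_clip_step (n := 0) (y := y) (by simpa using h)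
    simpa using this
  rw [fpsi_apply t ht1 ht2 le_rfl h1]
  have key : ((PadicInt.appr (clip p y 1) 1 : ℤ)) • t 0 = (0 : ℤ) • t 0 := by
    refine int_smul_eq_of_padic (p := p) (n := 1) ?_ ?_
    · rw [Ideal.mem_span_singleton]
      have hc : clip p y 1 = (p : ℤ_[p]) * ⟨y, h⟩ := by
        have e : ((clip p y 1 : ℤ_[p]) : ℚ_[p]) =
            (((p : ℤ_[p]) * ⟨y, h⟩ : ℤ_[p]) : ℚ_[p]) := by
          rw [clip_coe h1]; change y * (p : ℚ_[p]) ^ 1 = ((p : ℤ_[p]) : ℚ_[p]) * y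
          push_cast
          ring
        exact Subtype.coe_injective e
      have e1 : (((PadicInt.appr (clip p y 1) 1 : ℤ)) : ℤ_[p]) - ((0 : ℤ) : ℤ_[p]) =
          clip p y 1 - (clip p y 1 - PadicInt.appr (clip p y 1) 1) := by push_cast; ring
      rw [e1]
      refine dvd_sub ?_ ?_
      · rw [hc, pow_one]
        exact dvd_mul_right _ _
      · exact Ideal.mem_span_singleton.mp (PadicInt.appr_spec 1 (clip p y 1))
    · have h := ht1 0
      rwa [zero_add] at h
  show (PadicInt.appr (clip p y 1) 1) • t (1 - 1) = 0
  rw [show (1 : ℕ) - 1 = 0 from rfl]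
  rw [natCast_zsmul] at key
  rw [key, zero_smul]

end Aux4


/-- Let `A` be a `p`-power torsion abelian group such that (a) the Tate
module `T_p A` is isomorphic to `ℤ_p^{⊕e}`, (b) the `p`-adic completion of `A` is
isomorphic to `ℤ_p^{⊕s} ⊕ F'` with `F'` a finite abelian `p`-group, and (c) the inverse
system `{A[p^n]}` satisfies the Mittag–Leffler condition.  Then `A` is isomorphic to
`(ℚ_p/ℤ_p)^{⊕e} ⊕ F` for some finite abelian `p`-group `F`. -/
theorem statement4 (p : ℕ) [Fact p.Prime] (A : Type) [AddCommGroup A]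
    (hA : ∀ a : A, ∃ n : ℕ, p ^ n • a = 0) (e : ℕ)
    (ha : Nonempty ((Tate p A) ≃+ (Fin e → ℤ_[p])))
    (hb : ∃ (s : ℕ) (F' : Type) (_ : AddCommGroup F') (_ : Finite F'),
        (∀ x : F', ∃ n : ℕ, p ^ n • x = 0) ∧
          Nonempty ((Completion p A) ≃+ ((Fin s → ℤ_[p]) × F')))
    (hc : ∀ n : ℕ, 1 ≤ n → ∃ m : ℕ, n ≤ m ∧ ∀ m' : ℕ, m ≤ m' →
        (fun x : A => p ^ (m' - n) • x) '' {x : A | p ^ m' • x = 0} =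
          (fun x : A => p ^ (m - n) • x) '' {x : A | p ^ m • x = 0}) :
    ∃ (F : Type) (_ : AddCommGroup F) (_ : Finite F),
      (∀ x : F, ∃ n : ℕ, p ^ n • x = 0) ∧
        Nonempty (A ≃+ ((Fin e → QmodZ p) × F)) := by
  classical
  have hp := (Fact.out : p.Prime)
  have hpne : (p : ℚ_[p]) ≠ 0 := by exact_mod_cast (Nat.cast_ne_zero (R := ℚ_[p])).mpr hp.ne_zero
  obtain ⟨θ⟩ := ha
  set B := divSub p A with hBdef
  set tvec : Fin e → ↥(Tate p A) := fun i => θ.symm (Pi.single i 1) with htvecdef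
  have htmem : ∀ i, ((tvec i : ℕ → A)) ∈ Tate p A := fun i => (tvec i).2
  have ht1 : ∀ i n, p ^ (n + 1) • (tvec i : ℕ → A) n = 0 := fun i => (htmem i).1
  have ht2 : ∀ i n, p • (tvec i : ℕ → A) (n + 1) = (tvec i : ℕ → A) n := fun i => (htmem i).2
  set psub : Fin e → (QmodZ p →+ A) := fun i =>
    QuotientAddGroup.lift _ (fpsi p ((tvec i : ℕ → A)) (ht1 i) (ht2 i)) (by
      rintro x ⟨z, rfl⟩
      exact fpsi_int _ (ht1 i) (ht2 i) z.2) with hpsubdef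
  set Φ : (Fin e → QmodZ p) →+ A :=
    ∑ i : Fin e, (psub i).comp (Pi.evalAddMonoidHom (fun _ : Fin e => QmodZ p) i) with hPhidef
  have hΦapply : ∀ x : Fin e → QmodZ p, Φ x = ∑ i : Fin e, psub i (x i) := by
    intro x
    rw [hPhidef, AddMonoidHom.finset_sum_apply]
    rfl
  have hψeval : ∀ (i : Fin e) (y : ℚ_[p]) (n : ℕ), 1 ≤ n → ‖y * (p : ℚ_[p]) ^ n‖ ≤ 1 →
      psub i (QuotientAddGroup.mk y) =
        (PadicInt.appr (clip p y n) n) • (tvec i : ℕ → A) (n - 1) := by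
    intro i y n hn h
    rw [hpsubdef]
    show QuotientAddGroup.lift _ (fpsi p ((tvec i : ℕ → A)) (ht1 i) (ht2 i)) _
      (QuotientAddGroup.mk y) = _
    rw [QuotientAddGroup.lift_mk']
    exact fpsi_apply _ (ht1 i) (ht2 i) hn h
  -- coercion of sums of Tate elements
  have hcoesum : ∀ (z : Fin e → ℕ) (k : ℕ),
      (((∑ i : Fin e, (z i) • tvec i : ↥(Tate p A)) : ℕ → A)) k
        = ∑ i : Fin e, (z i) • ((tvec i : ℕ → A)) k := by
    intro z k
    have e1 : (((∑ i : Fin e, (z i) • tvec i : ↥(Tate p A)) : ℕ → A))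
        = ∑ i : Fin e, (z i) • ((tvec i : ℕ → A)) := by
      have := map_sum (Tate p A).subtype (fun i => (z i) • tvec i) Finset.univ
      simpa using this
    rw [e1, Finset.sum_apply]
    rfl
  have hθsum : ∀ z : Fin e → ℕ,
      θ (∑ i : Fin e, (z i) • tvec i) = fun j => ((z j : ℤ_[p])) := by
    intro z
    rw [map_sum]
    have e1 : ∀ i : Fin e, θ ((z i) • tvec i) = (z i) • Pi.single i (1 : ℤ_[p]) := by
      intro i
      rw [map_nsmul, htvecdef]
      simp
    rw [Finset.sum_congr rfl (fun i _ => e1 i)]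
    funext j
    rw [Finset.sum_apply]
    simp [Pi.single_apply, apply_ite, Finset.sum_ite_eq]
  -- the key level identity
  have hlevel : ∀ (c : Fin e → ℤ_[p]) (n : ℕ), 1 ≤ n →
      ((θ.symm c : ℕ → A)) (n - 1)
        = ∑ i : Fin e, (PadicInt.appr (c i) n) • ((tvec i : ℕ → A)) (n - 1) := by
    intro c n hn
    set z : Fin e → ℕ := fun i => PadicInt.appr (c i) n with hzdef
    set s : ↥(Tate p A) := ∑ i : Fin e, (z i) • tvec i with hsdef
    have hd : ∀ i : Fin e, ∃ dd : ℤ_[p], c i - ((z i : ℤ_[p])) = (p : ℤ_[p]) ^ n * dd := by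
      intro i
      have h1 := PadicInt.appr_spec n (c i)
      rw [Ideal.mem_span_singleton] at h1
      obtain ⟨dd, hdd⟩ := h1
      exact ⟨dd, hdd⟩
    choose d hdspec using hd
    have hc : c = θ s + (p ^ n) • d := by
      funext i
      rw [Pi.add_apply, hθsum z, Pi.smul_apply]
      have : (p ^ n) • d i = (p : ℤ_[p]) ^ n * d i := by
        rw [nsmul_eq_mul]
        push_cast
        ring
      rw [this]
      have := hdspec i
      linear_combination this
    have hsymm : θ.symm c = s + (p ^ n) • θ.symm d := by
      rw [hc, map_add, map_nsmul, θ.symm_apply_apply]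
    have hval : ((θ.symm c : ℕ → A)) (n - 1)
        = ((s : ℕ → A)) (n - 1) + p ^ n • ((θ.symm d : ℕ → A)) (n - 1) := by
      rw [hsymm]
      rfl
    have hzero : p ^ n • ((θ.symm d : ℕ → A)) (n - 1) = 0 := by
      have h1 := (θ.symm d).2.1 (n - 1)
      rwa [show n - 1 + 1 = n by omega] at h1
    rw [hval, hzero, add_zero, hsdef, hcoesum]
  -- torsion of the Pruefer group
  have hqtors : ∀ q : QmodZ p, ∃ n : ℕ, p ^ n • q = 0 := by
    intro q
    induction q using QuotientAddGroup.induction_on with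
    | H y =>
      obtain ⟨n, hn1, hn⟩ := exists_norm_le y
      refine ⟨n, ?_⟩
      have e1 : (p : ℕ) ^ n • QuotientAddGroup.mk y
          = (QuotientAddGroup.mk (p ^ n • y) : QmodZ p) := rfl
      rw [e1, QuotientAddGroup.eq_zero_iff]
      refine ⟨⟨y * (p : ℚ_[p]) ^ n, hn⟩, ?_⟩
      show ((⟨y * (p : ℚ_[p]) ^ n, hn⟩ : ℤ_[p]) : ℚ_[p]) = p ^ n • y
      rw [nsmul_eq_mul]
      push_cast
      ring
  -- injectivity on p-torsion
  have hinj1 : ∀ x : Fin e → QmodZ p, p • x = 0 → Φ x = 0 → x = 0 := by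
    intro x hpx hΦx
    have hrep : ∀ i, ∃ y : ℚ_[p], (QuotientAddGroup.mk y : QmodZ p) = x i := by
      intro i
      exact QuotientAddGroup.mk_surjective (x i)
    choose y hy using hrep
    have hcy : ∀ i, ∃ cc : ℤ_[p], ((cc : ℚ_[p])) = (p : ℚ_[p]) * y i := by
      intro i
      have h1 : p • x i = 0 := congrFun hpx i
      rw [← hy i] at h1
      have h2 : (QuotientAddGroup.mk (p • y i) : QmodZ p) = 0 := h1
      rw [QuotientAddGroup.eq_zero_iff] at h2
      obtain ⟨z, hz⟩ := h2
      refine ⟨z, ?_⟩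
      have : ((z : ℚ_[p])) = p • y i := hz
      rwa [nsmul_eq_mul] at this
    choose cvec hcvec using hcy
    have hynorm : ∀ i, ‖y i * (p : ℚ_[p]) ^ 1‖ ≤ 1 := by
      intro i
      rw [pow_one]
      have : y i * (p : ℚ_[p]) = ((cvec i : ℚ_[p])) := by rw [hcvec i]; ring
      rw [this]
      exact (cvec i).2
    have hclip1 : ∀ i, clip p (y i) 1 = cvec i := by
      intro i
      have e1 : ((clip p (y i) 1 : ℤ_[p]) : ℚ_[p]) = ((cvec i : ℤ_[p]) : ℚ_[p]) := by
        rw [clip_coe (hynorm i), hcvec i]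
        push_cast
        ring
      exact Subtype.coe_injective e1
    set z : Fin e → ℕ := fun i => PadicInt.appr (cvec i) 1 with hzdef
    have hΦx2 : ∑ i : Fin e, (z i) • ((tvec i : ℕ → A)) 0 = 0 := by
      rw [← hΦx, hΦapply]
      refine (Finset.sum_congr rfl ?_).symm
      intro i _
      rw [← hy i, hψeval i (y i) 1 le_rfl (hynorm i), hclip1 i]
    set sel : ↥(Tate p A) := ∑ i : Fin e, (z i) • tvec i with hseldef
    have hsel0 : ((sel : ℕ → A)) 0 = 0 := by rw [hseldef, hcoesum]; exact hΦx2
    obtain ⟨s', hs'T, hs'⟩ := tate_shift_s4 sel.2 hsel0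
    have hps' : p • (⟨s', hs'T⟩ : ↥(Tate p A)) = sel := by
      apply Subtype.ext
      funext k
      show p • s' k = ((sel : ℕ → A)) k
      rw [hs' k]
      exact sel.2.2 k
    have hθs : p • θ (⟨s', hs'T⟩ : ↥(Tate p A)) = fun j => ((z j : ℤ_[p])) := by
      rw [← map_nsmul, hps', hseldef, hθsum]
    funext i₀
    have hdvd : (p : ℤ_[p]) ∣ ((z i₀ : ℤ_[p])) := by
      have := congrFun hθs i₀
      rw [Pi.smul_apply, nsmul_eq_mul] at this
      exact ⟨θ (⟨s', hs'T⟩ : ↥(Tate p A)) i₀, this.symm⟩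
    have hdvdc : (p : ℤ_[p]) ∣ cvec i₀ := by
      have h1 := PadicInt.appr_spec 1 (cvec i₀)
      rw [Ideal.mem_span_singleton, pow_one] at h1
      have : cvec i₀ = (cvec i₀ - ((z i₀ : ℤ_[p]))) + ((z i₀ : ℤ_[p])) := by ring
      rw [this]
      exact dvd_add h1 hdvd
    obtain ⟨dd, hdd⟩ := hdvdc
    have hyint : y i₀ = ((dd : ℚ_[p])) := by
      have e1 : (p : ℚ_[p]) * y i₀ = (p : ℚ_[p]) * ((dd : ℚ_[p])) := by
        rw [← hcvec i₀, hdd]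
        push_cast
        ring
      exact mul_left_cancel₀ hpne e1
    rw [← hy i₀]
    show _ = (0 : QmodZ p)
    rw [QuotientAddGroup.eq_zero_iff]
    exact ⟨dd, hyint.symm⟩
  -- full injectivity
  have hinj : Function.Injective Φ := by
    rw [injective_iff_map_eq_zero]
    intro x hx
    by_contra hxne
    have htors : ∃ k : ℕ, p ^ k • x = 0 := by
      choose m hm using fun i => hqtors (x i)
      refine ⟨Finset.univ.sup m, ?_⟩
      funext i
      have h1 : p ^ Finset.univ.sup m • x i = 0 := by
        have h2 : m i ≤ Finset.univ.sup m := Finset.le_sup (Finset.mem_univ i)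
        have : p ^ Finset.univ.sup m • x i
            = p ^ (Finset.univ.sup m - m i) • (p ^ (m i) • x i) := by
          rw [← mul_smul, ← pow_add, show Finset.univ.sup m - m i + m i = Finset.univ.sup m
            by omega]
        rw [this, hm i, smul_zero]
      exact h1
    set k0 := Nat.find htors with hk0def
    have hk0 : p ^ k0 • x = 0 := Nat.find_spec htors
    have hk0ne : k0 ≠ 0 := by
      intro h
      rw [h, pow_zero, one_smul] at hk0
      exact hxne hk0
    set x' := p ^ (k0 - 1) • x with hx'def
    have hpx' : p • x' = 0 := by
      have e1 : p • x' = p ^ k0 • x := by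
        rw [hx'def, ← mul_smul, ← pow_succ', show k0 - 1 + 1 = k0 by omega]
      rw [e1, hk0]
    have hΦx' : Φ x' = 0 := by
      rw [hx'def, map_nsmul, hx, smul_zero]
    have hx'0 : x' = 0 := hinj1 x' hpx' hΦx'
    have := Nat.find_min htors (m := k0 - 1) (by omega)
    exact this hx'0
  -- range of Φ is contained in B
  have hΦB : ∀ x : Fin e → QmodZ p, Φ x ∈ B := by
    intro x
    rw [hΦapply]
    apply AddSubgroup.sum_mem
    intro i _
    have : ∀ q : QmodZ p, psub i q ∈ B := by
      intro q
      induction q using QuotientAddGroup.induction_on with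
      | H y =>
        rw [hψeval i y (Nlev p y) (Nlev_pos y) (Nlev_spec y)]
        exact AddSubgroup.nsmul_mem _ (tate_mem_divSub (htmem i) _) _
    exact this (x i)
  -- surjectivity onto B
  have hsurj : ∀ b ∈ B, ∃ x : Fin e → QmodZ p, Φ x = b := by
    intro b hb
    obtain ⟨k, hk⟩ := hA b
    have hbn : p ^ (k + 1) • b = 0 := by
      rw [pow_succ', mul_smul, hk, smul_zero]
    obtain ⟨t, htT, htk⟩ := tate_lift (fun x hx => divSub_pdiv hA hc hx) hb k hbn
    set telem : ↥(Tate p A) := ⟨t, htT⟩ with hteldef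
    set c := θ telem with hcdef
    set y : Fin e → ℚ_[p] := fun i => ((c i : ℚ_[p])) * (((p : ℚ_[p]) ^ (k + 1))⁻¹) with hydef
    have hynorm : ∀ i, ‖y i * (p : ℚ_[p]) ^ (k + 1)‖ ≤ 1 := by
      intro i
      have e1 : y i * (p : ℚ_[p]) ^ (k + 1) = ((c i : ℚ_[p])) := by
        rw [hydef]
        field_simp
      rw [e1]
      exact (c i).2
    have hclip : ∀ i, clip p (y i) (k + 1) = c i := by
      intro i
      have e1 : ((clip p (y i) (k + 1) : ℤ_[p]) : ℚ_[p]) = ((c i : ℤ_[p]) : ℚ_[p]) := by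
        rw [clip_coe (hynorm i), hydef]
        field_simp
      exact Subtype.coe_injective e1
    refine ⟨fun i => QuotientAddGroup.mk (y i), ?_⟩
    rw [hΦapply]
    have e2 : ∀ i : Fin e, psub i (QuotientAddGroup.mk (y i))
        = (PadicInt.appr (c i) (k + 1)) • ((tvec i : ℕ → A)) k := by
      intro i
      rw [hψeval i (y i) (k + 1) (by omega) (hynorm i), hclip i]
      norm_num
    rw [Finset.sum_congr rfl (fun i _ => e2 i)]
    have e3 := hlevel c (k + 1) (by omega)
    rw [show k + 1 - 1 = k by omega] at e3
    rw [← e3, hcdef, θ.symm_apply_apply]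
    exact htk
  -- the equivalence (Fin e → QmodZ p) ≃+ B
  set Φ' : (Fin e → QmodZ p) →+ ↥B :=
    { toFun := fun x => ⟨Φ x, hΦB x⟩
      map_zero' := Subtype.ext (map_zero Φ)
      map_add' := fun a b => Subtype.ext (map_add Φ a b) } with hΦ'def
  have hΦ'bij : Function.Bijective Φ' := by
    constructor
    · intro a b hab
      exact hinj (congrArg Subtype.val hab)
    · rintro ⟨b, hbB⟩
      obtain ⟨x, hx⟩ := hsurj b hbB
      exact ⟨x, Subtype.ext hx⟩
  set equivB : (Fin e → QmodZ p) ≃+ ↥B := AddEquiv.ofBijective Φ' hΦ'bij with heqB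
  -- the completion map
  have hcpt : ∀ a : A, (fun n => (QuotientAddGroup.mk a : A ⧸ mulRange (p ^ (n + 1)) A))
      ∈ Completion p A := by
    intro a n
    show projHom p A n (QuotientAddGroup.mk a) = QuotientAddGroup.mk a
    rw [projHom, QuotientAddGroup.map_mk]
    rfl
  set χ : A →+ ↥(Completion p A) :=
    { toFun := fun a => ⟨fun n => QuotientAddGroup.mk a, hcpt a⟩
      map_zero' := rfl
      map_add' := fun a b => rfl } with hχdef
  obtain ⟨s, F', instF', instFinF', hF'tors, ⟨ι⟩⟩ := hb
  set ρ : A →+ F' := (AddMonoidHom.snd (Fin s → ℤ_[p]) F').comp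
    (ι.toAddMonoidHom.comp χ) with hρdef
  have hBρ : ∀ b ∈ B, ρ b = 0 := by
    intro b hbB
    have hχb : χ b = 0 := by
      apply Subtype.ext
      funext n
      show (QuotientAddGroup.mk b : A ⧸ mulRange (p ^ (n + 1)) A) = 0
      rw [QuotientAddGroup.eq_zero_iff]
      obtain ⟨yy, hyy⟩ := hbB (n + 1)
      exact ⟨yy, hyy⟩
    rw [hρdef]
    simp [hχb]
  have hρB : ∀ a : A, ρ a = 0 → a ∈ B := by
    intro a hρa
    obtain ⟨k, hk⟩ := hA a
    have h1 : p ^ k • ι (χ a) = 0 := by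
      rw [← map_nsmul, ← map_nsmul, hk, map_zero, map_zero]
    have h2 : (ι (χ a)).1 = 0 := by
      funext i
      have h3 : p ^ k • (ι (χ a)).1 i = 0 := by
        have := congrArg Prod.fst h1
        rw [Prod.smul_fst] at this
        exact congrFun this i
      have h4 : ((p : ℤ_[p]) ^ k) * (ι (χ a)).1 i = 0 := by
        rw [← h3, nsmul_eq_mul]
        push_cast
        ring
      rcases mul_eq_zero.mp h4 with h | h
      · exfalso
        exact pow_ne_zero k ((Nat.cast_ne_zero (R := ℤ_[p])).mpr hp.ne_zero) h
      · exact h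
    have h5 : (ι (χ a)).2 = 0 := hρa
    have h6 : ι (χ a) = 0 := Prod.ext h2 h5
    have h7 : χ a = 0 := ι.injective (h6.trans (map_zero ι).symm)
    intro n
    have h8 : (QuotientAddGroup.mk a : A ⧸ mulRange (p ^ (n + 1)) A) = 0 := by
      have := congrArg Subtype.val h7
      exact congrFun this n
    rw [QuotientAddGroup.eq_zero_iff] at h8
    obtain ⟨yy, hyy⟩ := h8
    refine ⟨p • yy, ?_⟩
    have hyy' : p ^ (n + 1) • yy = a := hyy
    show p ^ n • (p • yy) = a
    rw [← mul_smul, ← pow_succ]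
    exact hyy'
  -- F := A ⧸ B
  have hFtors : ∀ q : A ⧸ B, ∃ n : ℕ, p ^ n • q = 0 := by
    intro q
    induction q using QuotientAddGroup.induction_on with
    | H a =>
      obtain ⟨n, hn⟩ := hA a
      refine ⟨n, ?_⟩
      have e1 : p ^ n • (QuotientAddGroup.mk a : A ⧸ B)
          = QuotientAddGroup.mk (p ^ n • a) := rfl
      rw [e1, hn]
      rfl
  set ρbar : (A ⧸ B) →+ F' := QuotientAddGroup.lift B ρ hBρ with hρbardef
  have hρbarinj : Function.Injective ρbar := by
    rw [injective_iff_map_eq_zero]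
    intro q hq
    induction q using QuotientAddGroup.induction_on with
    | H a =>
      have : ρ a = 0 := hq
      rw [QuotientAddGroup.eq_zero_iff]
      exact hρB a this
  have hFfin : Finite (A ⧸ B) := Finite.of_injective ρbar hρbarinj
  -- splitting
  obtain ⟨r, hr⟩ := exists_retraction (divSub_int_div hA hc)
  obtain ⟨equiv1⟩ := equiv_prod_of_retraction r hr
  refine ⟨A ⧸ B, inferInstance, hFfin, hFtors, ⟨?_⟩⟩
  exact equiv1.trans (AddEquiv.prodCongr equivB.symm (AddEquiv.refl _))
end

section
/- Let p be a prime, e a natural number, F a finite abelian p-group, and set A = (ℚ_p/ℤ_p)^{⊕e} ⊕ F. Then the cokernel of the evaluation homomorphism T_pA → A[p], which sends a compatible sequence (a_n)_{n≥1} to its first term a_1, is isomorphic to F[p]. -/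
/-- The evaluation homomorphism `T_p A → A[p]` sending a compatible sequence
`(a_n)_{n ≥ 1}` to its first term `a_1`. -/
def tateEval (p : ℕ) (A : Type*) [AddCommGroup A] : Tate p A →+ torsSub p A :=
  AddMonoidHom.mk'
    (fun a => ⟨(a : ℕ → A) 0, by
      have h := (mem_Tate.mp a.2).1 0
      rw [pow_one] at h
      exact mem_torsSub.mpr h⟩)
    (fun a b => rfl)

lemma qdiv (p : ℕ) [Fact p.Prime] (y : QmodZ p) : ∃ z : QmodZ p, p • z = y := by
  obtain ⟨q, rfl⟩ := QuotientAddGroup.mk'_surjective _ y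
  refine ⟨QuotientAddGroup.mk' _ ((p : ℚ_[p])⁻¹ * q), ?_⟩
  rw [← map_nsmul]
  congr 1
  have hp : (p : ℚ_[p]) ≠ 0 :=
    Nat.cast_ne_zero.mpr (Fact.out : p.Prime).ne_zero
  rw [nsmul_eq_mul]
  field_simp

lemma tate_zero_eq (p : ℕ) {A : Type*} [AddCommGroup A] {a : ℕ → A}
    (ha : a ∈ Tate p A) (n : ℕ) : a 0 = p ^ n • a n := by
  induction n with
  | zero => simp
  | succ n ih =>
    rw [ih, ← (mem_Tate.mp ha).2 n, ← mul_smul, ← pow_succ]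

/-- For `A = (ℚ_p/ℤ_p)^{⊕e} ⊕ F` with `F` a finite abelian `p`-group,
the cokernel of the evaluation homomorphism `T_p A → A[p]` is isomorphic to `F[p]`. -/
theorem statement6 (p : ℕ) [Fact p.Prime] (e : ℕ) (F : Type) [AddCommGroup F] [Finite F]
    (hF : ∀ x : F, ∃ n : ℕ, p ^ n • x = 0) :
    Nonempty
      (((torsSub p ((Fin e → QmodZ p) × F)) ⧸ (tateEval p ((Fin e → QmodZ p) × F)).range)
        ≃+ (torsSub p F)) := by
  classical
  set A := (Fin e → QmodZ p) × F with hA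
  -- uniform exponent bound for F
  obtain ⟨N, hN⟩ : ∃ N : ℕ, ∀ x : F, p ^ N • x = 0 := by
    cases nonempty_fintype F
    choose f hf using hF
    refine ⟨Finset.univ.sup f, fun x => ?_⟩
    obtain ⟨c, hc⟩ := pow_dvd_pow p (Finset.le_sup (Finset.mem_univ x))
    rw [hc, mul_comm, mul_smul, hf x, smul_zero]
  -- the second-component homomorphism
  have mem2 : ∀ x : torsSub p A, p • (x : A).2 = 0 := by
    intro x
    exact congrArg Prod.snd x.2
  let φ : torsSub p A →+ torsSub p F :=
    AddMonoidHom.mk' (fun x => ⟨(x : A).2, mem_torsSub.mpr (mem2 x)⟩) (fun a b => rfl)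
  have hsurj : Function.Surjective φ := by
    intro y
    refine ⟨⟨((0 : Fin e → QmodZ p), (y : F)), ?_⟩, rfl⟩
    show p • (((0 : Fin e → QmodZ p), (y : F)) : A) = 0
    have hy : p • (y : F) = 0 := y.2
    rw [Prod.smul_def, hy, smul_zero]
    rfl
  have hker : (tateEval p A).range = φ.ker := by
    ext x
    constructor
    · rintro ⟨a, rfl⟩
      have h0 : (a : ℕ → A) 0 = p ^ N • (a : ℕ → A) N := tate_zero_eq p a.2 N
      have : ((a : ℕ → A) 0).2 = 0 := by
        rw [h0]; exact hN _
      exact AddMonoidHom.mem_ker.mpr (Subtype.ext this)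
    · intro hx
      have hx2 : ((x : A)).2 = 0 := congrArg Subtype.val (AddMonoidHom.mem_ker.mp hx)
      -- divisibility step within the subgroup { y | y.2 = 0 }
      have step : ∀ y : {y : A // y.2 = 0}, ∃ z : {z : A // z.2 = 0}, p • (z : A) = y := by
        rintro ⟨⟨y1, y2⟩, h⟩
        dsimp at h; subst h
        choose z hz using fun i => qdiv p (y1 i)
        refine ⟨⟨(z, 0), rfl⟩, ?_⟩
        show p • ((z, (0 : F)) : A) = (y1, 0)
        rw [Prod.smul_def, smul_zero]
        exact Prod.ext (funext fun i => hz i) rfl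
      choose G hG using step
      let a : ℕ → A := fun n => ((G^[n] ⟨(x : A), hx2⟩ : {y : A // y.2 = 0}) : A)
      have ha0 : a 0 = (x : A) := rfl
      have hstepa : ∀ n, p • a (n + 1) = a n := by
        intro n
        show p • ((G^[n + 1] ⟨(x : A), hx2⟩ : {y : A // y.2 = 0}) : A) = _
        rw [Function.iterate_succ_apply']
        exact hG _
      have htors : ∀ n, p ^ (n + 1) • a n = 0 := by
        intro n
        induction n with
        | zero =>
          rw [pow_one, ha0]
          exact x.2
        | succ n ih =>
          rw [pow_succ, mul_smul, hstepa n, ih]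
      refine ⟨⟨a, mem_Tate.mpr ⟨htors, hstepa⟩⟩, ?_⟩
      exact Subtype.ext ha0
  rw [hker]
  exact ⟨QuotientAddGroup.quotientKerEquivOfSurjective φ hsurj⟩
end

section
/- Let k be an algebraically closed field of characteristic p > 0, let V be a finite-dimensional k-vector space, and let T : V → V be an additive map satisfying T(a^p • v) = a • T(v) for all a ∈ k and v ∈ V. Then the map 1 − T : V → V (sending v to v − T(v)) is surjective. -/
open Polynomial Finset

noncomputable def auxQ {k : Type} [Field k] (p : ℕ) (c : ℕ → k) : ℕ → Polynomial k
  | 0 => X ^ p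
  | (j+1) => (auxQ p c j - C (c j) * X) ^ p

lemma auxQ_spec {k : Type} [Field k] {p : ℕ} (hp : 1 < p) (c : ℕ → k) :
    ∀ j, (auxQ p c j).Monic ∧ (auxQ p c j).natDegree = p ^ (j+1) := by
  intro j
  induction j with
  | zero => exact ⟨monic_X_pow p, by simp [auxQ]⟩
  | succ j ih =>
    have hm := ih.1
    have hd : (C (c j) * X).degree < (auxQ p c j).degree := by
      refine lt_of_le_of_lt (degree_C_mul_X_le _) ?_
      rw [degree_eq_natDegree hm.ne_zero, ih.2]
      exact_mod_cast Nat.one_lt_pow (Nat.succ_ne_zero j) hp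
    have hnd : (C (c j) * X).natDegree < (auxQ p c j).natDegree := by
      refine lt_of_le_of_lt ((natDegree_C_mul_le _ _).trans natDegree_X_le) ?_
      rw [ih.2]
      exact Nat.one_lt_pow (Nat.succ_ne_zero j) hp
    constructor
    · exact (hm.sub_of_left hd).pow p
    · rw [auxQ, natDegree_pow, natDegree_sub_eq_left_of_natDegree_lt hnd, ih.2]
      ring

/-- Let `k` be an algebraically closed field of characteristic `p > 0`,
`V` a finite-dimensional `k`-vector space, and `T : V → V` an additive map satisfying
`T (a^p • v) = a • T v` for all `a : k`, `v : V`.  Then `1 - T : v ↦ v - T v` is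
surjective. -/
theorem statement9 (k : Type) [Field k] [IsAlgClosed k] (p : ℕ) (hp : 0 < p) [CharP k p]
    (V : Type) [AddCommGroup V] [Module k V] [FiniteDimensional k V]
    (T : V → V) (hadd : ∀ x y : V, T (x + y) = T x + T y)
    (hsemi : ∀ (a : k) (v : V), T (a ^ p • v) = a • T v) :
    Function.Surjective (fun v : V => v - T v) := by
  classical
  have hp1 : 1 < p :=
    ((CharP.char_is_prime_or_zero k p).resolve_right (by omega)).one_lt
  set T' : V →+ V := AddMonoidHom.mk' T hadd with hT'
  have hT'app : ∀ v, T' v = T v := fun _ => rfl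
  intro w
  -- Step 1: linear dependence of the iterates of T on w
  set d := Module.finrank k V with hd
  have hni : ¬ LinearIndependent k (fun i : Fin (d+1) => T^[(i : ℕ)] w) := by
    intro h
    have := h.fintype_card_le_finrank
    simp [hd] at this
  rw [Fintype.not_linearIndependent_iff] at hni
  obtain ⟨g, hg0, i0, hi0⟩ := hni
  set G : ℕ → k := fun i => if h : i < d+1 then g ⟨i, h⟩ else 0 with hG
  have hGsum : ∑ i ∈ range (d+1), G i • T^[i] w = 0 := by
    rw [← Fin.sum_univ_eq_sum_range (fun i => G i • T^[i] w) (d+1)]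
    convert hg0 using 2 with i
    simp [hG, i.isLt, not_lt.mpr (Nat.lt_succ_iff.mp i.isLt)]
  -- Step 2: pick the top nonzero coefficient
  set s : Finset ℕ := (range (d+1)).filter (fun i => G i ≠ 0) with hs
  have hsne : s.Nonempty := ⟨(i0 : ℕ), by simp [hs, hG, i0.isLt, hi0, Nat.lt_succ_iff.mp i0.isLt]⟩
  set m := s.max' hsne with hm
  have hms : m ∈ s := s.max'_mem hsne
  have hGm : G m ≠ 0 := (mem_filter.mp hms).2
  have hmd : m < d + 1 := mem_range.mp (mem_filter.mp hms).1
  have hGzero : ∀ i, m < i → G i = 0 := by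
    intro i hi
    by_cases hid : i < d + 1
    · by_contra hne
      exact absurd (s.le_max' i (by simp [hs, hid, hne])) (not_le.mpr hi)
    · rw [hG]; exact dif_neg hid
  -- Step 3: T^[m] w is a combination of lower iterates
  set c : ℕ → k := fun i => -(G i) / G m with hc
  have hsum2 : ∑ i ∈ range (m+1), G i • T^[i] w = 0 := by
    have hsub : range (m+1) ⊆ range (d+1) := by
      intro x hx; rw [mem_range] at *; omega
    have heq := Finset.sum_subset (f := fun i => G i • T^[i] w) hsub ?_
    · rw [heq, hGsum]
    · intro x hx hxm
      rw [mem_range] at hx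
      rw [mem_range, not_lt] at hxm
      rw [hGzero x (by omega), zero_smul]
  have hTm : T^[m] w = ∑ i ∈ range m, c i • T^[i] w := by
    rw [Finset.sum_range_succ] at hsum2
    have h1 : ∑ i ∈ range m, G i • T^[i] w = - (G m • T^[m] w) := by
      rw [eq_neg_iff_add_eq_zero]; exact hsum2
    calc T^[m] w = (-(G m)⁻¹) • ∑ i ∈ range m, G i • T^[i] w := by
          rw [h1, smul_neg, neg_smul, neg_neg, smul_smul, inv_mul_cancel₀ hGm, one_smul]
      _ = ∑ i ∈ range m, c i • T^[i] w := by
          rw [Finset.smul_sum]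
          refine Finset.sum_congr rfl fun i _ => ?_
          rw [smul_smul]
          congr 1
          rw [hc]
          field_simp
  -- Step 4: case m = 0
  have hT0 : T 0 = 0 := by
    have := hadd 0 0
    simpa using this.symm
  rcases Nat.eq_zero_or_eq_succ_pred m with hm0 | hms'
  · refine ⟨0, ?_⟩
    rw [hm0] at hTm
    simp only [Function.iterate_zero, id_eq, range_zero, Finset.sum_empty] at hTm
    simp [hT0, hTm]
  set n := m - 1 with hn
  have hmn : m = n + 1 := hms'
  -- Step 5: the polynomial and its root
  set c' : ℕ → k := fun j => c (n - j) with hc'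
  set F : Polynomial k := auxQ p c' n - (C (c 0) * X + 1) with hF
  have hq := auxQ_spec hp1 c' n
  have hFdeg : F.degree ≠ 0 := by
    have hlt : (C (c 0) * X + 1).degree < (auxQ p c' n).degree := by
      refine lt_of_le_of_lt (degree_add_le _ _) ?_
      rw [degree_eq_natDegree hq.1.ne_zero, hq.2]
      have h1 : (1 : ℕ) < p ^ (n+1) := Nat.one_lt_pow (Nat.succ_ne_zero n) hp1
      refine max_lt (lt_of_le_of_lt (degree_C_mul_X_le _) (by exact_mod_cast h1)) ?_
      refine lt_of_le_of_lt degree_one_le (by exact_mod_cast pow_pos hp (n+1))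
    have hmon : F.Monic := hq.1.sub_of_left hlt
    have hnd : F.natDegree = p ^ (n+1) := by
      have hle : (C (c 0) * X + 1).natDegree ≤ 1 :=
        (natDegree_add_le (C (c 0) * X) 1).trans
          (max_le ((natDegree_C_mul_le _ _).trans natDegree_X_le) (by simp))
      have h1 : (C (c 0) * X + 1).natDegree < (auxQ p c' n).natDegree :=
        lt_of_le_of_lt hle (by rw [hq.2]; exact Nat.one_lt_pow (Nat.succ_ne_zero n) hp1)
      rw [hF, natDegree_sub_eq_left_of_natDegree_lt h1, hq.2]
    rw [degree_eq_natDegree hmon.ne_zero, hnd]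
    exact_mod_cast pow_ne_zero _ (by omega : p ≠ 0)
  obtain ⟨t, ht⟩ := IsAlgClosed.exists_root F hFdeg
  have hroot : eval t (auxQ p c' n) = c 0 * t + 1 := by
    have h : eval t F = 0 := ht
    rw [hF, eval_sub, sub_eq_zero] at h
    rw [h, eval_add, eval_mul, eval_C, eval_X, eval_one]
  set x : ℕ → k := fun i => eval t (auxQ p c' (n - i)) with hx
  have hxn : x n = t ^ p := by
    show eval t (auxQ p c' (n - n)) = t ^ p
    rw [Nat.sub_self]
    simp [auxQ]
  have hxstep : ∀ i, i < n → x i = (x (i+1) - c (i+1) * t) ^ p := by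
    intro i hi
    show eval t (auxQ p c' (n - i)) = (eval t (auxQ p c' (n - (i+1))) - c (i+1) * t) ^ p
    have h1 : n - i = (n - (i+1)) + 1 := by omega
    have h2 : c' (n - (i+1)) = c (i+1) := by
      show c (n - (n - (i+1))) = c (i+1)
      congr 1
      omega
    rw [h1, auxQ, eval_pow, eval_sub, eval_mul, eval_C, eval_X, h2]
  have hx0 : x 0 = c 0 * t + 1 := by
    show eval t (auxQ p c' (n - 0)) = c 0 * t + 1
    rw [Nat.sub_zero, hroot]
  rw [hmn] at hTm
  set v : V := ∑ i ∈ range (n+1), x i • T^[i] w with hv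
  refine ⟨v, ?_⟩
  show v - T v = w
  have hTsum : ∀ (f : ℕ → V) (u : Finset ℕ), T (∑ i ∈ u, f i) = ∑ i ∈ u, T (f i) :=
    fun f u => map_sum T' f u
  have hTv : T v = ∑ i ∈ range n, (x (i+1) - c (i+1) * t) • T^[i+1] w + t • T^[n+1] w := by
    rw [hv, hTsum, Finset.sum_range_succ]
    congr 1
    · refine Finset.sum_congr rfl fun i hi => ?_
      rw [mem_range] at hi
      rw [hxstep i hi, hsemi, Function.iterate_succ_apply']
    · rw [hxn, hsemi, Function.iterate_succ_apply']
  have hTv2 : T v = ∑ i ∈ range n, x (i+1) • T^[i+1] w + (t * c 0) • w := by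
    rw [hTv, hTm, Finset.smul_sum]
    simp only [smul_smul]
    rw [Finset.sum_range_succ']
    simp only [Function.iterate_zero, id_eq]
    rw [← add_assoc, ← Finset.sum_add_distrib]
    congr 1
    refine Finset.sum_congr rfl fun i _ => ?_
    rw [← add_smul]
    congr 1
    ring
  have hv' : v = x 0 • w + ∑ i ∈ range n, x (i+1) • T^[i+1] w := by
    rw [hv, Finset.sum_range_succ', add_comm]
    simp only [Function.iterate_zero, id_eq]
  have hkey : x 0 - t * c 0 = 1 := by rw [hx0]; ring
  rw [hTv2, hv']
  have habel : x 0 • w + (∑ i ∈ range n, x (i+1) • T^[i+1] w)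
      - ((∑ i ∈ range n, x (i+1) • T^[i+1] w) + (t * c 0) • w)
      = x 0 • w - (t * c 0) • w := by abel
  rw [habel, ← sub_smul, hkey, one_smul]
end

section
/- Let k be an algebraically closed field of characteristic p > 0, let V be a finite-dimensional k-vector space, and let T : V → V be an additive bijection satisfying T(a^p • v) = a • T(v) for all a ∈ k and v ∈ V. Then the fixed set K = {v ∈ V : T(v) = v} (which equals the kernel of 1 − T and is an 𝔽_p-subspace of V) has dimension over 𝔽_p equal to dim_k V, and K spans V as a k-vector space; equivalently, the natural k-linear map K ⊗_{𝔽_p} k → V is an isomorphism. -/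
open Polynomial
section MainAux
variable {k : Type} [Field k] [IsAlgClosed k] {p : ℕ} [Fact p.Prime] [CharP k p]

theorem solve_artin_schreier (a : k) (hp1 : 1 < p) : ∃ t : k, t - t ^ p = a := by
  have hdlt : (C a - X : k[X]).degree < (X ^ p : k[X]).degree := by
    apply lt_of_le_of_lt (degree_sub_le _ _)
    rw [degree_X_pow, degree_X]
    have hC : (C a).degree ≤ 0 := degree_C_le
    have : max (C a).degree (1 : WithBot ℕ) ≤ 1 := max_le (hC.trans (by norm_num)) le_rfl
    apply lt_of_le_of_lt this
    exact_mod_cast hp1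
  have hdeg : (X ^ p + (C a - X) : k[X]).degree = (p : WithBot ℕ) := by
    rw [degree_add_eq_left_of_degree_lt hdlt, degree_X_pow]
  obtain ⟨t, ht⟩ := IsAlgClosed.exists_root (p := (X ^ p + (C a - X) : k[X]))
    (by rw [hdeg]; exact_mod_cast (by omega : p ≠ 0))
  have ht' : t ^ p + (a - t) = 0 := by simpa using ht
  exact ⟨t, by linear_combination -ht'⟩

end MainAux

/-- Over an algebraically closed field, a nonzero polynomial with zero derivative
has a nonzero "fixed point": `q.eval x = x` for some `x ≠ 0`. -/
theorem exists_ne_zero_eval_eq_self {k : Type} [Field k] [IsAlgClosed k]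
    (q : k[X]) (hq : q ≠ 0) (hq' : derivative q = 0) :
    ∃ x : k, x ≠ 0 ∧ q.eval x = x := by
  by_contra hcon
  push_neg at hcon
  set f : k[X] := q - X with hf
  have hf0 : f ≠ 0 := by
    intro h0
    have : q = X := by rwa [hf, sub_eq_zero] at h0
    rw [this, derivative_X] at hq'
    exact one_ne_zero hq'
  have hroots : ∀ r ∈ f.roots, r = 0 := by
    intro r hr
    have h1 : f.eval r = 0 := (mem_roots hf0).1 hr
    have h2 : q.eval r = r := by
      simp only [hf, eval_sub, eval_X, sub_eq_zero] at h1
      exact h1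
    by_contra hr0
    exact hcon r hr0 h2
  have hsplit : Splits f := IsAlgClosed.splits f
  have hcard : Multiset.card f.roots = f.natDegree := (splits_iff_card_roots).1 hsplit
  have heq : f = C f.leadingCoeff * (Multiset.map (fun a => X - C a) f.roots).prod :=
    hsplit.eq_prod_roots
  have hrepl : f.roots = Multiset.replicate f.natDegree 0 := by
    rw [← hcard]; exact Multiset.eq_replicate_of_mem hroots
  obtain ⟨c, m, hc0, hfX⟩ : ∃ (c : k) (m : ℕ), c ≠ 0 ∧ f = C c * X ^ m := by
    refine ⟨f.leadingCoeff, f.natDegree, leadingCoeff_ne_zero.2 hf0, ?_⟩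
    have hpr : (Multiset.map (fun a => X - C a) (Multiset.replicate f.natDegree (0:k))).prod
        = X ^ f.natDegree := by
      rw [Multiset.map_replicate, Multiset.prod_replicate]
      norm_num
    conv_lhs => rw [heq, hrepl, hpr]
  have hder : derivative f = -1 := by
    rw [hf, derivative_sub, hq', derivative_X, zero_sub]
  have hderX : derivative f = C (c * (m : k)) * X ^ (m - 1) := by
    rw [hfX, derivative_C_mul, derivative_X_pow, C_mul]
    ring
  rcases m with _ | _ | m
  · -- m = 0 : derivative f = 0 = -1
    rw [hder] at hderX
    simp only [pow_zero, mul_one, Nat.cast_zero, mul_zero, map_zero] at hderX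
    have := congrArg (fun g => Polynomial.eval 0 g) hderX
    simp at this
  · -- m = 1 : C c = -1, f = -X, q = 0
    rw [hder] at hderX
    norm_num at hderX
    have hc : c = -1 := by
      have := congrArg (fun g => Polynomial.eval 0 g) hderX
      simpa using this.symm
    have hq0 : q = 0 := by
      have h1 : q - X = C (-1) * X ^ 1 := by rw [← hc, ← hfX, hf]
      simp only [pow_one, map_neg, map_one, neg_mul, one_mul] at h1
      linear_combination h1
    exact hq hq0
  · -- m ≥ 2 : coeff 0 of derivative is 0 ≠ -1
    have hcoeff : (derivative f).coeff 0 = 0 := by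
      rw [hderX, coeff_C_mul, coeff_X_pow]
      simp
    rw [hder] at hcoeff
    simp at hcoeff

/-- In a field of characteristic `p`, an element with `a ^ p = a` lies in the prime field. -/
theorem mem_primeField_of_pow_eq {k : Type} [Field k] {p : ℕ} [Fact p.Prime] [CharP k p]
    {a : k} (ha : a ^ p = a) : ∃ m : ZMod p, (ZMod.cast m : k) = a := by
  classical
  have hp1 : 1 < p := (Fact.out : p.Prime).one_lt
  set f : k[X] := X ^ p - X with hf
  have hf0 : f ≠ 0 := FiniteField.X_pow_card_sub_X_ne_zero k hp1
  have hdeg : f.natDegree = p := FiniteField.X_pow_card_sub_X_natDegree_eq k hp1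
  have hroot : ∀ m : ZMod p, f.IsRoot (ZMod.cast m : k) := by
    intro m
    have h2 : ((ZMod.cast m : k)) ^ p = (ZMod.cast m : k) := by
      calc ((ZMod.cast m : k)) ^ p = ((ZMod.castHom (dvd_refl p) k) m) ^ p := by
            rw [ZMod.castHom_apply]
        _ = (ZMod.castHom (dvd_refl p) k) (m ^ p) := by rw [map_pow]
        _ = (ZMod.castHom (dvd_refl p) k) m := by rw [ZMod.pow_card]
        _ = (ZMod.cast m : k) := ZMod.castHom_apply m
    simp [hf, IsRoot, h2]
  by_contra hcon
  push_neg at hcon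
  have haroot : f.IsRoot a := by simp [hf, IsRoot, ha]
  set s : Finset k := Finset.univ.image (fun m : ZMod p => (ZMod.cast m : k)) with hs
  have hinj : Function.Injective (fun m : ZMod p => (ZMod.cast m : k)) := by
    intro x y hxy
    apply ZMod.castHom_injective k
    simpa [ZMod.castHom_apply] using hxy
  have hscard : s.card = p := by
    rw [hs, Finset.card_image_of_injective _ hinj, Finset.card_univ, ZMod.card]
  have hsub : insert a s ⊆ f.roots.toFinset := by
    intro x hx
    rcases Finset.mem_insert.1 hx with rfl | hx
    · rw [Multiset.mem_toFinset, mem_roots hf0]; exact haroot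
    · rw [hs] at hx
      obtain ⟨m, _, rfl⟩ := Finset.mem_image.1 hx
      rw [Multiset.mem_toFinset, mem_roots hf0]; exact hroot m
  have has : a ∉ s := by
    rw [hs]
    intro hx
    obtain ⟨m, _, hm⟩ := Finset.mem_image.1 hx
    exact hcon m hm
  have hcard2 : p + 1 ≤ f.roots.toFinset.card := by
    have := Finset.card_le_card hsub
    rwa [Finset.card_insert_of_notMem has, hscard] at this
  have hle : f.roots.toFinset.card ≤ p := by
    calc f.roots.toFinset.card ≤ Multiset.card f.roots := Multiset.toFinset_card_le _
      _ ≤ f.natDegree := f.card_roots'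
      _ = p := hdeg
  omega

/-- Recursively defined polynomials encoding the fixed-point equations. -/
noncomputable def qpoly {k : Type} [Field k] (p : ℕ) (c : ℕ → k) : ℕ → k[X]
  | 0 => C (c 0) * X ^ p
  | (m + 1) => (qpoly p c m) ^ p + C (c (m + 1)) * X ^ p

theorem qpoly_derivative {k : Type} [Field k] (p : ℕ) [CharP k p] (c : ℕ → k) :
    ∀ m, derivative (qpoly p c m) = 0 := by
  have hX : ∀ a : k, derivative (C a * X ^ p) = 0 := by
    intro a
    rw [derivative_C_mul, derivative_X_pow, CharP.cast_eq_zero k p]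
    simp
  intro m
  induction m with
  | zero => exact hX _
  | succ m ih =>
      rw [qpoly, derivative_add, derivative_pow, ih, hX]
      simp

theorem qpoly_spec {k : Type} [Field k] (p : ℕ) (hp : 1 < p) (c : ℕ → k) :
    ∀ m, ((∀ i ≤ m, c i = 0) ∧ qpoly p c m = 0) ∨
      (qpoly p c m ≠ 0 ∧ p ≤ (qpoly p c m).natDegree) := by
  have hp0 : p ≠ 0 := by omega
  have hbase : ∀ a : k, a ≠ 0 → (C a * X ^ p ≠ 0 ∧ p ≤ (C a * X ^ p).natDegree) := by
    intro a ha
    constructor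
    · intro h0
      have := natDegree_C_mul_X_pow p a ha
      rw [h0] at this
      simp at this
      omega
    · rw [natDegree_C_mul_X_pow p a ha]
  intro m
  induction m with
  | zero =>
      by_cases hc : c 0 = 0
      · left
        constructor
        · intro i hi
          have : i = 0 := Nat.le_zero.1 hi
          rw [this]; exact hc
        · rw [qpoly, hc]; simp
      · right; rw [qpoly]; exact hbase _ hc
  | succ m ih =>
      rcases ih with ⟨hall, hq0⟩ | ⟨hne, hdeg⟩
      · by_cases hc : c (m + 1) = 0
        · left
          constructor
          · intro i hi
            rcases Nat.lt_or_ge i (m + 1) with h | h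
            · exact hall i (by omega)
            · have : i = m + 1 := by omega
              rw [this]; exact hc
          · rw [qpoly, hq0, hc]
            simp [zero_pow hp0]
        · right
          rw [qpoly, hq0, zero_pow hp0, zero_add]
          exact hbase _ hc
      · right
        have hqp : (qpoly p c m) ^ p ≠ 0 := pow_ne_zero _ hne
        have hdegpow : ((qpoly p c m) ^ p).natDegree = p * (qpoly p c m).natDegree := by
          rw [natDegree_pow]
        have hlt : ((C (c (m + 1)) * X ^ p : k[X])).degree < ((qpoly p c m) ^ p).degree := by
          have h1 : ((C (c (m + 1)) * X ^ p : k[X])).degree ≤ (p : WithBot ℕ) := by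
            calc ((C (c (m + 1)) * X ^ p : k[X])).degree ≤ (C (c (m+1))).degree + (X ^ p : k[X]).degree := degree_mul_le _ _
              _ ≤ 0 + p := by
                  gcongr
                  · exact degree_C_le
                  · rw [degree_X_pow]
              _ = p := by rw [zero_add]
          have h2 : (p : WithBot ℕ) < ((qpoly p c m) ^ p).degree := by
            rw [degree_eq_natDegree hqp, hdegpow]
            have : p < p * (qpoly p c m).natDegree := by
              have := hdeg
              calc p < p * p := by nlinarith
                _ ≤ p * (qpoly p c m).natDegree := Nat.mul_le_mul_left p hdeg
            exact_mod_cast this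
          exact lt_of_le_of_lt h1 h2
        have hdegsum : (qpoly p c (m+1)).degree = ((qpoly p c m) ^ p).degree := by
          rw [qpoly]
          exact degree_add_eq_left_of_degree_lt hlt
        have hne2 : qpoly p c (m+1) ≠ 0 := by
          intro h0
          rw [h0, degree_zero] at hdegsum
          exact hqp (degree_eq_bot.1 hdegsum.symm)
        constructor
        · exact hne2
        · have : (qpoly p c (m+1)).natDegree = ((qpoly p c m) ^ p).natDegree := by
            exact natDegree_eq_of_degree_eq (by rw [hdegsum])
          rw [this, hdegpow]
          calc p ≤ p * p := Nat.le_mul_of_pos_left p (by omega)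
            _ ≤ p * (qpoly p c m).natDegree := Nat.mul_le_mul_left p hdeg


/-- The set of fixed points of an additive map `T : V → V`, as an additive subgroup. -/
def fixedSubgroup {V : Type*} [AddCommGroup V] (T : V → V)
    (hadd : ∀ x y : V, T (x + y) = T x + T y) : AddSubgroup V where
  carrier := {v | T v = v}
  zero_mem' := by
    have h0 : T 0 = T 0 + T 0 := by simpa using hadd 0 0
    have : T 0 = 0 := by
      have := h0.symm
      rwa [add_eq_left] at this
    simpa using this
  add_mem' := by
    intro a b ha hb
    simp only [Set.mem_setOf_eq] at *
    rw [hadd, ha, hb]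
  neg_mem' := by
    intro a ha
    simp only [Set.mem_setOf_eq] at *
    have h0 : T 0 = 0 := by
      have h0' : T 0 = T 0 + T 0 := by simpa using hadd 0 0
      have := h0'.symm
      rwa [add_eq_left] at this
    have : T (-a) + T a = 0 := by
      rw [← hadd, neg_add_cancel, h0]
    have hneg : T (-a) = -T a := by linear_combination (norm := abel) this
    rw [hneg, ha]

/-- In characteristic `p`, the fixed points of an additive map on a `k`-vector space
form a vector space over `𝔽_p = ZMod p`. -/
def fixedModule (k : Type*) [Field k] (p : ℕ) [CharP k p]
    (V : Type*) [AddCommGroup V] [Module k V]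
    (T : V → V) (hadd : ∀ x y : V, T (x + y) = T x + T y) :
    Module (ZMod p) ↥(fixedSubgroup T hadd) :=
  AddCommGroup.zmodModule (by
    intro x
    apply Subtype.ext
    have : ((p • x : ↥(fixedSubgroup T hadd)) : V) = p • (x : V) := rfl
    rw [this]
    have : (p : ℕ) • (x : V) = ((p : k)) • (x : V) := by
      rw [Nat.cast_smul_eq_nsmul]
    rw [this, CharP.cast_eq_zero k p, zero_smul]
    rfl)

/-- Let `k` be an algebraically closed field of characteristic `p > 0`,
`V` a finite-dimensional `k`-vector space, and `T : V → V` an additive bijection with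
`T (a^p • v) = a • T v`.  Then the fixed set `K = {v | T v = v}` (an `𝔽_p`-subspace of
`V`) has `𝔽_p`-dimension equal to `dim_k V`, and `K` spans `V` over `k`. -/
theorem statement10 (k : Type) [Field k] [IsAlgClosed k] (p : ℕ) (hp : 0 < p) [CharP k p]
    (V : Type) [AddCommGroup V] [Module k V] [FiniteDimensional k V]
    (T : V → V) (hbij : Function.Bijective T)
    (hadd : ∀ x y : V, T (x + y) = T x + T y)
    (hsemi : ∀ (a : k) (v : V), T (a ^ p • v) = a • T v) :
    (@Module.finrank (ZMod p) ↥(fixedSubgroup T hadd) _ _ (fixedModule k p V T hadd))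
        = Module.finrank k V ∧
      Submodule.span k ((fixedSubgroup T hadd : Set V)) = ⊤ := by
  classical
  have hppr : p.Prime := (CharP.char_is_prime_or_zero k p).resolve_right (by omega)
  haveI : Fact p.Prime := ⟨hppr⟩
  have hp1 : 1 < p := hppr.one_lt
  have hmemK : ∀ v : V, v ∈ fixedSubgroup T hadd ↔ T v = v := fun v => Iff.rfl
  have hT0 : T 0 = 0 := (hmemK 0).1 (fixedSubgroup T hadd).zero_mem
  set E := Equiv.ofBijective T hbij with hE
  set S : V → V := ⇑E.symm with hSdef
  have hTS : ∀ v, T (S v) = v := fun v => E.apply_symm_apply v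
  have hST : ∀ v, S (T v) = v := fun v => E.symm_apply_apply v
  have hTinj : Function.Injective T := hbij.1
  have hSadd : ∀ x y, S (x + y) = S x + S y := by
    intro x y; apply hTinj; rw [hadd, hTS, hTS, hTS]
  have hS0 : S 0 = 0 := by apply hTinj; rw [hTS, hT0]
  have hSsemi : ∀ (a : k) (v : V), S (a • v) = a ^ p • S v := by
    intro a v; apply hTinj; rw [hTS, hsemi, hTS]
  have hfixS : ∀ v, T v = v ↔ S v = v := by
    intro v
    constructor
    · intro h; have := hST v; rwa [h] at this
    · intro h; have := hTS v; rwa [h] at this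
  have hfr : ∀ a : k, ∃ b : k, b ^ p = a := fun a => IsAlgClosed.exists_pow_nat_eq a hp
  have hfrobinj : ∀ a b : k, a ^ p = b ^ p → a = b := by
    intro a b h
    have h2 : (a - b) ^ p = 0 := by rw [sub_pow_char, h, sub_self]
    have h3 : a - b = 0 := (pow_eq_zero_iff (by omega : p ≠ 0)).1 h2
    exact sub_eq_zero.1 h3
  set W := Submodule.span k ((fixedSubgroup T hadd : Set V)) with hWdef
  have hKsubW : ∀ x ∈ fixedSubgroup T hadd, x ∈ W := fun x hx => Submodule.subset_span hx
  have hTW : ∀ w ∈ W, T w ∈ W := by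
    intro w hw
    induction hw using Submodule.span_induction with
    | mem x hx => rw [(hmemK x).1 hx]; exact hKsubW x hx
    | zero => rw [hT0]; exact W.zero_mem
    | add x y hx hy ihx ihy => rw [hadd]; exact W.add_mem ihx ihy
    | smul a x hx ih =>
        obtain ⟨b, rfl⟩ := hfr a
        rw [hsemi]; exact W.smul_mem b ih
  have hSW : ∀ w ∈ W, S w ∈ W := by
    intro w hw
    induction hw using Submodule.span_induction with
    | mem x hx =>
        have h1 : S x = x := (hfixS x).1 ((hmemK x).1 hx)
        rw [h1]; exact hKsubW x hx
    | zero => rw [hS0]; exact W.zero_mem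
    | add x y hx hy ihx ihy => rw [hSadd]; exact W.add_mem ihx ihy
    | smul a x hx ih => rw [hSsemi]; exact W.smul_mem _ ih
  have hWS : ∀ w, S w ∈ W → w ∈ W := by
    intro w h
    have := hTW _ h
    rwa [hTS] at this
  have hlang : ∀ w ∈ W, ∀ a : k, ∃ w', w' ∈ W ∧ w' - S w' = a • w := by
    intro w hw
    induction hw using Submodule.span_induction with
    | mem x hx =>
        intro a
        obtain ⟨t, ht⟩ := solve_artin_schreier (k := k) (p := p) a hp1
        refine ⟨t • x, W.smul_mem t (hKsubW x hx), ?_⟩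
        have hxfix : S x = x := (hfixS x).1 ((hmemK x).1 hx)
        rw [hSsemi, hxfix, ← sub_smul, ht]
    | zero => intro a; exact ⟨0, W.zero_mem, by rw [hS0]; simp⟩
    | add x y hx hy ihx ihy =>
        intro a
        obtain ⟨w1, hw1, he1⟩ := ihx a
        obtain ⟨w2, hw2, he2⟩ := ihy a
        refine ⟨w1 + w2, W.add_mem hw1 hw2, ?_⟩
        rw [hSadd, smul_add, ← he1, ← he2]; abel
    | smul b x hx ih =>
        intro a
        obtain ⟨w', hw', he⟩ := ih (a * b)
        exact ⟨w', hw', by rw [he, mul_smul]⟩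
  -- main statement 2: the span is everything
  have hspan : W = ⊤ := by
    by_contra hne
    obtain ⟨v, hv⟩ : ∃ v : V, v ∉ W := by
      by_contra hall
      push_neg at hall
      exact hne (Submodule.eq_top_iff'.2 hall)
    set e : ℕ → V := fun i => S^[i] v with he
    have he0 : e 0 = v := rfl
    have hesucc : ∀ i, e (i + 1) = S (e i) := fun i => Function.iterate_succ_apply' S i v
    set U : ℕ → Submodule k V :=
      fun n => W ⊔ Submodule.span k (Set.range fun i : Fin n => e ↑i) with hU
    have hU0 : U 0 = W := by simp [hU]
    have hUmono : ∀ n, U n ≤ U (n + 1) := by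
      intro n
      refine sup_le_sup le_rfl (Submodule.span_mono ?_)
      rintro x ⟨i, rfl⟩
      exact ⟨i.castSucc, by simp⟩
    have hUsucc : ∀ n, e n ∈ U (n + 1) := by
      intro n
      exact Submodule.mem_sup_right (Submodule.subset_span ⟨Fin.last n, by simp⟩)
    have hex : ∃ n, e n ∈ U n := by
      by_contra hnex
      push_neg at hnex
      have hlt : ∀ n, U n < U (n + 1) := fun n =>
        lt_of_le_of_ne (hUmono n) (fun hEq => hnex n (by rw [hEq]; exact hUsucc n))
      have hrank : ∀ n, n ≤ Module.finrank k (U n) := by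
        intro n
        induction n with
        | zero => exact Nat.zero_le _
        | succ n ih =>
            have := Submodule.finrank_lt_finrank_of_lt (hlt n)
            omega
      have h1 := hrank (Module.finrank k V + 1)
      have h2 := Submodule.finrank_le (U (Module.finrank k V + 1))
      omega
    obtain ⟨n₀, hn₀, hmin⟩ : ∃ n, e n ∈ U n ∧ ∀ m, m < n → e m ∉ U m :=
      ⟨Nat.find hex, Nat.find_spec hex, fun m hm => Nat.find_min hex hm⟩
    have hn₀pos : 0 < n₀ := by
      rcases Nat.eq_zero_or_pos n₀ with h0 | h
      · exfalso
        rw [h0, hU0, he0] at hn₀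
        exact hv hn₀
      · exact h
    have hindep : ∀ m, m ≤ n₀ → ∀ b : ℕ → k,
        (∑ i ∈ Finset.range m, b i • e i) ∈ W → ∀ i < m, b i = 0 := by
      intro m
      induction m with
      | zero => intro _ b _ i hi; omega
      | succ m ih =>
          intro hm b hsum
          have hbm : b m = 0 := by
            by_contra hbm
            apply hmin m (by omega)
            have h1 : b m • e m =
                (∑ i ∈ Finset.range (m + 1), b i • e i) - ∑ i ∈ Finset.range m, b i • e i := by
              rw [Finset.sum_range_succ]; abel
            have h2 : (∑ i ∈ Finset.range m, b i • e i) ∈ U m := by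
              apply Submodule.sum_mem
              intro i hi
              apply Submodule.smul_mem
              exact Submodule.mem_sup_right
                (Submodule.subset_span ⟨⟨i, Finset.mem_range.1 hi⟩, rfl⟩)
            have h3 : b m • e m ∈ U m := by
              rw [h1]
              exact Submodule.sub_mem _ (Submodule.mem_sup_left hsum) h2
            have h4 := Submodule.smul_mem (U m) (b m)⁻¹ h3
            rwa [inv_smul_smul₀ hbm] at h4
          rw [Finset.sum_range_succ, hbm, zero_smul, add_zero] at hsum
          intro i hi
          rcases Nat.lt_or_ge i m with h | h
          · exact ih (by omega) b hsum i h
          · have hieq : i = m := by omega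
            rw [hieq]; exact hbm
    obtain ⟨w, hwW, z, hz, hwz⟩ := Submodule.mem_sup.1 hn₀
    obtain ⟨c, hc⟩ := (Submodule.mem_span_range_iff_exists_fun k).1 hz
    set cb : ℕ → k := fun i => if h : i < n₀ then c ⟨i, h⟩ else 0 with hcb
    have hcsum : ∑ i ∈ Finset.range n₀, cb i • e i = z := by
      rw [← hc, ← Fin.sum_univ_eq_sum_range (fun i => cb i • e i) n₀]
      apply Finset.sum_congr rfl
      intro i _
      simp only [hcb, i.isLt, dif_pos, Fin.eta]
    have hen₀ : e n₀ = w + ∑ i ∈ Finset.range n₀, cb i • e i := by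
      rw [hcsum, hwz]
    have hcex : ∃ i, i ≤ n₀ - 1 ∧ cb i ≠ 0 := by
      by_contra hall
      push_neg at hall
      have hz0 : ∀ i < n₀, cb i = 0 := fun i hi => hall i (by omega)
      have hew : e n₀ = w := by
        rw [hen₀, Finset.sum_eq_zero, add_zero]
        intro i hi
        rw [hz0 i (Finset.mem_range.1 hi), zero_smul]
      have hvW : ∀ m, e m ∈ W → v ∈ W := by
        intro m
        induction m with
        | zero => intro h; rwa [he0] at h
        | succ m ih =>
            intro h
            apply ih
            apply hWS
            rwa [← hesucc m]
      exact hv (hvW n₀ (hew ▸ hwW))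
    obtain ⟨i₀, hi₀, hci₀⟩ := hcex
    set q := qpoly p cb (n₀ - 1) with hq
    have hqne : q ≠ 0 := by
      rcases qpoly_spec p hp1 cb (n₀ - 1) with ⟨hall, _⟩ | ⟨hne2, _⟩
      · exact absurd (hall i₀ hi₀) hci₀
      · exact hne2
    obtain ⟨x, hx0, hxeval⟩ :=
      exists_ne_zero_eval_eq_self q hqne (qpoly_derivative p cb (n₀ - 1))
    set b : ℕ → k := fun i => (qpoly p cb i).eval x with hb
    have hb0 : b 0 = cb 0 * x ^ p := by rw [hb]; simp [qpoly]
    have hbs : ∀ i, b (i + 1) = (b i) ^ p + cb (i + 1) * x ^ p := by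
      intro i; rw [hb]; simp [qpoly]
    obtain ⟨w', hw'W, hw'⟩ := hlang w hwW (x ^ p)
    obtain ⟨m, hm⟩ : ∃ m, n₀ = m + 1 := ⟨n₀ - 1, by omega⟩
    have hbtop : b m = x := by
      have hmeq : m = n₀ - 1 := by omega
      rw [hb, hmeq]; exact hxeval
    set u₀ : V := ∑ i ∈ Finset.range (m + 1), b i • e i with hu₀
    have hen' : e (m + 1) = w + ∑ i ∈ Finset.range (m + 1), cb i • e i := by
      rw [← hm]; exact hen₀
    have hmap : ∀ (t : Finset ℕ) (f : ℕ → V), S (∑ i ∈ t, f i) = ∑ i ∈ t, S (f i) :=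
      fun t f => map_sum (AddMonoidHom.mk' S hSadd) f t
    have hSu₀ : S u₀ = u₀ + x ^ p • w := by
      have hA : S u₀ = ∑ i ∈ Finset.range (m + 1), (b i) ^ p • e (i + 1) := by
        rw [hu₀, hmap]
        exact Finset.sum_congr rfl fun i _ => by rw [hSsemi, ← hesucc]
      have hsplit : S u₀ =
          (∑ i ∈ Finset.range m, (b i) ^ p • e (i + 1)) + x ^ p • e (m + 1) := by
        rw [hA, Finset.sum_range_succ, hbtop]
      have hxp : x ^ p • e (m + 1) = x ^ p • w +
          ((∑ i ∈ Finset.range m, (x ^ p * cb (i + 1)) • e (i + 1)) + (x ^ p * cb 0) • e 0) := by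
        rw [hen', smul_add, Finset.smul_sum]
        congr 1
        rw [← Finset.sum_range_succ' (fun i => (x ^ p * cb i) • e i) m]
        apply Finset.sum_congr rfl
        intro i _
        rw [smul_smul]
      have hcomb : (∑ i ∈ Finset.range m, (b i) ^ p • e (i + 1)) +
          (∑ i ∈ Finset.range m, (x ^ p * cb (i + 1)) • e (i + 1)) =
          ∑ i ∈ Finset.range m, b (i + 1) • e (i + 1) := by
        rw [← Finset.sum_add_distrib]
        apply Finset.sum_congr rfl
        intro i _
        rw [← add_smul, hbs i, mul_comm (cb (i + 1)) (x ^ p)]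
      have hb00 : (x ^ p * cb 0) • e 0 = b 0 • e 0 := by rw [hb0, mul_comm]
      have hu₀' : u₀ = (∑ i ∈ Finset.range m, b (i + 1) • e (i + 1)) + b 0 • e 0 := by
        rw [hu₀, Finset.sum_range_succ' (fun i => b i • e i) m]
      calc S u₀ = (∑ i ∈ Finset.range m, (b i) ^ p • e (i + 1)) + x ^ p • e (m + 1) := hsplit
        _ = (∑ i ∈ Finset.range m, (b i) ^ p • e (i + 1)) + (x ^ p • w +
            ((∑ i ∈ Finset.range m, (x ^ p * cb (i + 1)) • e (i + 1)) +
              (x ^ p * cb 0) • e 0)) := by rw [hxp]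
        _ = ((∑ i ∈ Finset.range m, (b i) ^ p • e (i + 1)) +
            (∑ i ∈ Finset.range m, (x ^ p * cb (i + 1)) • e (i + 1))) +
            (x ^ p * cb 0) • e 0 + x ^ p • w := by abel
        _ = (∑ i ∈ Finset.range m, b (i + 1) • e (i + 1)) + b 0 • e 0 + x ^ p • w := by
            rw [hcomb, hb00]
        _ = u₀ + x ^ p • w := by rw [← hu₀']
    set u : V := u₀ + w' with hu
    have hufix : S u = u := by
      rw [hu, hSadd, hSu₀]
      have hSw' : S w' = w' - x ^ p • w := by rw [← hw']; abel
      rw [hSw']; abel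
    have huK : u ∈ fixedSubgroup T hadd := (hmemK u).2 ((hfixS u).2 hufix)
    have huW : u ∈ W := hKsubW u huK
    have hu₀W : u₀ ∈ W := by
      have hsub2 := Submodule.sub_mem W huW hw'W
      rwa [hu, add_sub_cancel_right] at hsub2
    have hfin := hindep n₀ le_rfl b (by rw [hm, ← hu₀]; exact hu₀W) m (by omega)
    rw [hbtop] at hfin
    exact hx0 hfin
  refine ⟨?_, hspan⟩
  obtain ⟨s, hsK, hsspan, hsli⟩ :=
    exists_linearIndependent k ((fixedSubgroup T hadd : Set V))
  rw [← hWdef, hspan] at hsspan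
  have hsfin : s.Finite := hsli.setFinite
  haveI := hsfin.fintype
  have hsrange : Set.range (fun x : s => (x : V)) = s := Subtype.range_coe
  let bV : Module.Basis s k V := Module.Basis.mk hsli (by rw [hsrange]; exact hsspan.ge)
  have hcardV : Module.finrank k V = Fintype.card s := Module.finrank_eq_card_basis bV
  letI instM : Module (ZMod p) ↥(fixedSubgroup T hadd) := fixedModule k p V T hadd
  show @Module.finrank (ZMod p) ↥(fixedSubgroup T hadd) _ _ instM = Module.finrank k V
  have hsmul : ∀ (cc : ZMod p) (y : ↥(fixedSubgroup T hadd)),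
      ((cc • y : ↥(fixedSubgroup T hadd)) : V) = (ZMod.cast cc : k) • (y : V) := by
    intro cc y
    have h1 : cc • y = ((ZMod.cast cc : ℤ) : ZMod p) • y := by rw [ZMod.intCast_zmod_cast]
    have h2 : ((((ZMod.cast cc : ℤ) : ZMod p) • y : ↥(fixedSubgroup T hadd)) : V)
        = (ZMod.cast cc : ℤ) • (y : V) := by
      rw [Int.cast_smul_eq_zsmul]
      exact map_zsmul ((fixedSubgroup T hadd).subtype) _ _
    rw [h1, h2, ← ZMod.intCast_cast (R := k) cc]
    exact (Int.cast_smul_eq_zsmul k (ZMod.cast cc : ℤ) (y : V)).symm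
  have hcastinj : ∀ cc : ZMod p, (ZMod.cast cc : k) = 0 → cc = 0 := by
    intro cc h
    apply ZMod.castHom_injective k (n := p)
    rw [map_zero]
    rw [ZMod.castHom_apply]
    exact h
  have hcoesum : ∀ (t : Finset s) (f : s → ↥(fixedSubgroup T hadd)),
      ((∑ j ∈ t, f j : ↥(fixedSubgroup T hadd)) : V) = ∑ j ∈ t, ((f j : V)) :=
    fun t f => map_sum ((fixedSubgroup T hadd).subtype) f t
  let g : s → ↥(fixedSubgroup T hadd) := fun i => ⟨(i : V), hsK i.2⟩
  have hgcoe : ∀ i : s, ((g i : V)) = (i : V) := fun i => rfl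
  have hgli : LinearIndependent (ZMod p) g := by
    rw [Fintype.linearIndependent_iff]
    intro a ha i
    have hcoe : ((∑ j, a j • g j : ↥(fixedSubgroup T hadd)) : V)
        = ∑ j, (ZMod.cast (a j) : k) • (j : V) := by
      rw [hcoesum]
      exact Finset.sum_congr rfl fun j _ => by rw [hsmul, hgcoe]
    have hz : ∑ j, (ZMod.cast (a j) : k) • (j : V) = 0 := by
      rw [← hcoe, ha]
      rfl
    exact hcastinj _ ((Fintype.linearIndependent_iff.1 hsli) _ hz i)
  have hgsp : ⊤ ≤ Submodule.span (ZMod p) (Set.range g) := by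
    intro y _
    have hyV : (y : V) ∈ Submodule.span k (Set.range (fun x : s => (x : V))) := by
      rw [hsrange, hsspan]; exact Submodule.mem_top
    obtain ⟨f, hf⟩ := (Submodule.mem_span_range_iff_exists_fun k).1 hyV
    have hyfix : T (y : V) = (y : V) := (hmemK _).1 y.2
    choose r hr using hfr
    have hmapT : ∀ (t : Finset s) (ff : s → V), T (∑ i ∈ t, ff i) = ∑ i ∈ t, T (ff i) :=
      fun t ff => map_sum (AddMonoidHom.mk' T hadd) ff t
    have hTy : T (y : V) = ∑ j, r (f j) • (j : V) := by
      rw [← hf, hmapT]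
      apply Finset.sum_congr rfl
      intro j _
      have h3 : T (f j • (j : V)) = r (f j) • T (j : V) := by
        conv_lhs => rw [← hr (f j)]
        exact hsemi _ _
      rw [h3, (hmemK _).1 (hsK j.2)]
    have heq2 : ∑ j, f j • (j : V) = ∑ j, r (f j) • (j : V) := by
      rw [hf, ← hTy]
      exact hyfix.symm
    have hdiff : ∀ j, f j - r (f j) = 0 := by
      have hzz : ∑ j, (f j - r (f j)) • (j : V) = 0 := by
        have : ∀ j : s, (f j - r (f j)) • (j : V) = f j • (j : V) - r (f j) • (j : V) :=
          fun j => sub_smul _ _ _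
        rw [Finset.sum_congr rfl fun j _ => this j, Finset.sum_sub_distrib, heq2, sub_self]
      exact fun j => (Fintype.linearIndependent_iff.1 hsli) _ hzz j
    have hfp : ∀ j, (f j) ^ p = f j := by
      intro j
      have h1 : f j = r (f j) := sub_eq_zero.1 (hdiff j)
      calc (f j) ^ p = (r (f j)) ^ p := by rw [← h1]
        _ = f j := hr (f j)
    choose mm hmm using fun j => mem_primeField_of_pow_eq (hfp j)
    have hy : y = ∑ j, mm j • g j := by
      apply Subtype.ext
      rw [hcoesum]
      have : ∀ j : s, ((mm j • g j : ↥(fixedSubgroup T hadd)) : V) = f j • (j : V) := by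
        intro j
        rw [hsmul, hgcoe, hmm j]
      rw [Finset.sum_congr rfl fun j _ => this j, hf]
    rw [hy]
    exact Submodule.sum_mem _ fun j _ =>
      Submodule.smul_mem _ _ (Submodule.subset_span ⟨j, rfl⟩)
  let bK : Module.Basis s (ZMod p) ↥(fixedSubgroup T hadd) := Module.Basis.mk hgli hgsp
  rw [Module.finrank_eq_card_basis bK, hcardV]
end
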